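/- arXiv:1205.0023 — 4 statements merged into one kernel-verified Lean document; each statement's English description precedes it below -/
import Mathlib

section
/- Let m ≥ 3, let Λ ∈ ℝ^{m×m} be symmetric positive definite, let ȳ ∈ ℝ^m, and let Ω = {b ∈ ℝ^m : b_k − 2b_{k+1} + b_{k+2} ≥ 0 for k = 1,…,m−2}. A vector b̂ ∈ Ω is the (unique) minimizer over Ω of g(b) = (1/2)bᵀΛb − bᵀȳ if and only if the following hold: 0 ≤ D₂b̂ ⊥ C_{γ•}C(Λb̂ − ȳ) ≥ 0, where γ = {1,…,m−2}, and C_{m•}(Λb̂ − ȳ) = 0 and C_{m•}C(Λb̂ − ȳ) = 0. -/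
open Matrix

noncomputable section

/-- Second-order difference of a vector: `(D₂ b)_k = b_k - 2 b_{k+1} + b_{k+2}` (0-indexed). -/
def secondDiff {m : ℕ} (b : Fin m → ℝ) (i : Fin (m - 2)) : ℝ :=
  b ⟨i.val, by have := i.isLt; omega⟩ - 2 * b ⟨i.val + 1, by have := i.isLt; omega⟩
    + b ⟨i.val + 2, by have := i.isLt; omega⟩

/-- The objective function `g(b) = (1/2) bᵀ Λ b - bᵀ ȳ`. -/
def objFun {m : ℕ} (Lam : Matrix (Fin m) (Fin m) ℝ) (ybar b : Fin m → ℝ) : ℝ :=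
  (1 / 2) * (b ⬝ᵥ (Lam *ᵥ b)) - b ⬝ᵥ ybar

/-- The second-order difference matrix `D₂ ∈ ℝ^{(m-2)×m}`. -/
def D2 (m : ℕ) : Matrix (Fin (m - 2)) (Fin m) ℝ := fun k i =>
  if i.val = k.val then 1 else if i.val = k.val + 1 then -2
  else if i.val = k.val + 2 then 1 else 0

/-- The lower-triangular matrix of ones `C ∈ ℝ^{m×m}`. -/
def Cmat (m : ℕ) : Matrix (Fin m) (Fin m) ℝ := fun i j => if j ≤ i then 1 else 0

/-- The submatrix `C_{γ•}` of `C` consisting of the rows indexed by `γ = {1,…,m-2}`. -/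
def Cgam (m : ℕ) : Matrix (Fin (m - 2)) (Fin m) ℝ := fun k j =>
  Cmat m ⟨k.val, by have := k.isLt; omega⟩ j

/-! The constraint set `Ω = {b | D₂ b ≥ 0}` is a convex cone, so `b̂ ∈ Ω` minimizes the convex
quadratic `g` iff its gradient `s = Λ b̂ - ȳ` lies in the dual cone `Ω*` and `b̂ᵀ s = 0`.
Summing by parts twice gives, for every `d` (indices 1-based as in the paper),
`dᵀ s = (C s)_m d_m - (C C s)_{m-1} (d_m - d_{m-1}) + (D₂ d)ᵀ C_{γ•} C s`.
Testing `s ∈ Ω*` against the lineality directions `1` and `(1, 2, …, m)` of `Ω` kills both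
boundary coefficients (and `(C C s)_m = (C C s)_{m-1} + (C s)_m`), and testing against the ramps
`d_i = (i - k - 1)₊`, for which `D₂ d = e_k`, gives `C_{γ•} C s ≥ 0`; once the boundary terms
vanish, `b̂ᵀ s = (D₂ b̂)ᵀ C_{γ•} C s`. -/

open Finset Filter Topology

def partialSum (s : ℕ → ℝ) (i : ℕ) : ℝ := ∑ j ∈ range (i + 1), s j

lemma partialSum_succ (s : ℕ → ℝ) (i : ℕ) :
    partialSum s (i + 1) = partialSum s i + s (i + 1) :=
  sum_range_succ _ _

theorem sum_range_mul_eq_by_parts (s d : ℕ → ℝ) (n : ℕ) :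
    ∑ i ∈ range (n + 3), s i * d i =
      partialSum s (n + 2) * d (n + 2)
        - partialSum (partialSum s) (n + 1) * (d (n + 2) - d (n + 1))
        + ∑ k ∈ range (n + 1), partialSum (partialSum s) k * (d k - 2 * d (k + 1) + d (k + 2)) := by
  induction n with
  | zero =>
    simp only [partialSum, sum_range_succ, range_one, sum_singleton, range_zero, sum_empty]
    ring
  | succ n ih =>
    rw [sum_range_succ, ih, sum_range_succ _ (n + 1), partialSum_succ (partialSum s) (n + 1),
      partialSum_succ s (n + 2)]
    ring

def extendByZero {m : ℕ} (w : Fin m → ℝ) (i : ℕ) : ℝ := if h : i < m then w ⟨i, h⟩ else 0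

section

variable {m : ℕ}

lemma extendByZero_of_lt (w : Fin m → ℝ) {i : ℕ} (h : i < m) : extendByZero w i = w ⟨i, h⟩ :=
  dif_pos h

lemma Cmat_mulVec_apply (w : Fin m → ℝ) (i : Fin m) :
    (Cmat m *ᵥ w) i = partialSum (extendByZero w) i := by
  have hrange : {j ∈ range m | j < (i : ℕ) + 1} = range (i + 1) := by
    ext j; simp only [mem_filter, mem_range]; omega
  rw [partialSum, ← hrange, sum_filter,
    ← Fin.sum_univ_eq_sum_range (fun j => if j < (i : ℕ) + 1 then extendByZero w j else 0)]
  simp only [mulVec, dotProduct]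
  refine sum_congr rfl fun j _ => ?_
  simp only [Cmat, extendByZero, dif_pos j.isLt, Fin.le_def, Nat.lt_succ_iff, ite_mul, one_mul,
    zero_mul]

lemma Cmat_mulVec_Cmat_mulVec_apply (w : Fin m → ℝ) (i : Fin m) :
    (Cmat m *ᵥ (Cmat m *ᵥ w)) i = partialSum (partialSum (extendByZero w)) i := by
  rw [Cmat_mulVec_apply, partialSum, partialSum]
  refine sum_congr rfl fun j hj => ?_
  have hj : j < m := by have := i.isLt; simp only [mem_range] at hj; omega
  rw [extendByZero_of_lt _ hj, Cmat_mulVec_apply]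

lemma dotProduct_eq_sum_range_extendByZero (d s : Fin m → ℝ) :
    d ⬝ᵥ s = ∑ i ∈ range m, extendByZero s i * extendByZero d i := by
  rw [← Fin.sum_univ_eq_sum_range (fun i => extendByZero s i * extendByZero d i)]
  refine sum_congr rfl fun i _ => ?_
  rw [extendByZero_of_lt _ i.isLt, extendByZero_of_lt _ i.isLt, mul_comm]

lemma D2_mulVec (b : Fin m → ℝ) : D2 m *ᵥ b = secondDiff b := by
  ext k
  have hk := k.isLt
  have hrow : (fun j => D2 m k j) = Pi.single ⟨k, by omega⟩ 1 + Pi.single ⟨k + 1, by omega⟩ (-2)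
      + Pi.single ⟨k + 2, by omega⟩ 1 := by
    ext j
    simp only [D2, Pi.add_apply, Pi.single_apply, Fin.ext_iff]
    split_ifs <;> first | omega | norm_num
  rw [mulVec, hrow]
  simp only [add_dotProduct, single_dotProduct, secondDiff]
  ring

lemma secondDiff_apply (d : Fin m → ℝ) (k : Fin (m - 2)) :
    secondDiff d k =
      extendByZero d k - 2 * extendByZero d (k + 1) + extendByZero d (k + 2) := by
  have hk := k.isLt
  rw [extendByZero_of_lt d (by omega), extendByZero_of_lt d (by omega),
    extendByZero_of_lt d (by omega), secondDiff]

lemma Cgam_mulVec_apply (v : Fin m → ℝ) (k : Fin (m - 2)) :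
    (Cgam m *ᵥ v) k = (Cmat m *ᵥ v) ⟨k, by omega⟩ :=
  rfl

theorem dotProduct_eq_sum_by_parts (hm : 3 ≤ m) (d s : Fin m → ℝ) :
    d ⬝ᵥ s =
      (Cmat m *ᵥ s) ⟨m - 1, Nat.sub_one_lt (by omega)⟩ * d ⟨m - 1, Nat.sub_one_lt (by omega)⟩
        - (Cmat m *ᵥ (Cmat m *ᵥ s)) ⟨m - 2, by omega⟩
          * (d ⟨m - 1, Nat.sub_one_lt (by omega)⟩ - d ⟨m - 2, by omega⟩)
        + (D2 m *ᵥ d) ⬝ᵥ (Cgam m *ᵥ (Cmat m *ᵥ s)) := by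
  have key := sum_range_mul_eq_by_parts (extendByZero s) (extendByZero d) (m - 3)
  rw [show m - 3 + 3 = m by omega, show m - 3 + 2 = m - 1 by omega,
    show m - 3 + 1 = m - 2 by omega] at key
  rw [dotProduct_eq_sum_range_extendByZero, key, Cmat_mulVec_apply, Cmat_mulVec_Cmat_mulVec_apply,
    extendByZero_of_lt d (by omega : m - 1 < m), extendByZero_of_lt d (by omega : m - 2 < m),
    dotProduct, ← Fin.sum_univ_eq_sum_range]
  congr 1
  refine sum_congr rfl fun k _ => ?_
  rw [D2_mulVec, secondDiff_apply, mul_comm, Cgam_mulVec_apply, Cmat_mulVec_Cmat_mulVec_apply]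

end

theorem ConvexCone.forall_sub_dotProduct_nonneg_iff {𝕜 n : Type*} [Field 𝕜] [LinearOrder 𝕜]
    [IsStrictOrderedRing 𝕜] [Fintype n] {K : ConvexCone 𝕜 (n → 𝕜)} {x : n → 𝕜} (hx : x ∈ K)
    (s : n → 𝕜) :
    (∀ b ∈ K, 0 ≤ (b - x) ⬝ᵥ s) ↔ (∀ b ∈ K, 0 ≤ b ⬝ᵥ s) ∧ x ⬝ᵥ s = 0 := by
  constructor
  · intro h
    have hdouble := h _ (K.smul_mem (two_pos : (0 : 𝕜) < 2) hx)
    have hhalf := h _ (K.smul_mem (half_pos one_pos : (0 : 𝕜) < 1 / 2) hx)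
    simp only [sub_dotProduct, smul_dotProduct, smul_eq_mul] at hdouble hhalf
    refine ⟨fun b hb => ?_, by linarith⟩
    simpa using h _ (K.add_mem hx hb)
  · rintro ⟨h, hxs⟩ b hb
    rw [sub_dotProduct, hxs, sub_zero]
    exact h b hb

section Quadratic

variable {m : ℕ} {Lam : Matrix (Fin m) (Fin m) ℝ} {ybar : Fin m → ℝ}

lemma objFun_add (hsym : Lam.IsSymm) (b d : Fin m → ℝ) :
    objFun Lam ybar (b + d) =
      objFun Lam ybar b + d ⬝ᵥ (Lam *ᵥ b - ybar) + 1 / 2 * (d ⬝ᵥ (Lam *ᵥ d)) := by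
  have hcross : b ⬝ᵥ (Lam *ᵥ d) = d ⬝ᵥ (Lam *ᵥ b) := by
    rw [dotProduct_mulVec, ← mulVec_transpose, hsym.eq, dotProduct_comm]
  simp only [objFun, mulVec_add, dotProduct_add, add_dotProduct, dotProduct_sub, hcross]
  ring

theorem isMinOn_objFun_iff (hsym : Lam.IsSymm) (hpsd : Lam.PosSemidef) {S : Set (Fin m → ℝ)}
    (hS : Convex ℝ S) {bhat : Fin m → ℝ} (hbhat : bhat ∈ S) :
    IsMinOn (objFun Lam ybar) S bhat ↔ ∀ b ∈ S, 0 ≤ (b - bhat) ⬝ᵥ (Lam *ᵥ bhat - ybar) := by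
  constructor
  · intro hmin b hb
    set d := b - bhat
    set A := d ⬝ᵥ (Lam *ᵥ d)
    set B := d ⬝ᵥ (Lam *ᵥ bhat - ybar)
    have hA : 0 ≤ A := by simpa using hpsd.dotProduct_mulVec_nonneg d
    have hslope : ∀ t ∈ Set.Ioo (0 : ℝ) 1, 0 ≤ B + t * A / 2 := by
      rintro t ⟨ht0, ht1⟩
      have hle := isMinOn_iff.mp hmin _ (hS.add_smul_sub_mem hbhat hb ⟨ht0.le, ht1.le⟩)
      rw [objFun_add hsym] at hle
      simp only [smul_dotProduct, mulVec_smul, dotProduct_smul, smul_eq_mul] at hle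
      nlinarith
    have hlim : Tendsto (fun t : ℝ => B + t * A / 2) (𝓝[>] 0) (𝓝 B) :=
      tendsto_nhdsWithin_of_tendsto_nhds <|
        (by fun_prop : Continuous fun t : ℝ => B + t * A / 2).tendsto' 0 B (by simp)
    exact ge_of_tendsto hlim (eventually_of_mem (Ioo_mem_nhdsGT one_pos) hslope)
  · intro h
    refine isMinOn_iff.mpr fun b hb => ?_
    have hA : 0 ≤ (b - bhat) ⬝ᵥ (Lam *ᵥ (b - bhat)) := by
      simpa using hpsd.dotProduct_mulVec_nonneg (b - bhat)
    have := objFun_add (ybar := ybar) hsym bhat (b - bhat)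
    rw [add_sub_cancel] at this
    linarith [h b hb]

end Quadratic

section DiscreteConvexCone

variable {m : ℕ}

lemma Cmat_mulVec_apply_succ (w : Fin m → ℝ) (i : ℕ) (hi : i + 1 < m) :
    (Cmat m *ᵥ w) ⟨i + 1, hi⟩ = (Cmat m *ᵥ w) ⟨i, by omega⟩ + w ⟨i + 1, hi⟩ := by
  rw [Cmat_mulVec_apply, Cmat_mulVec_apply, partialSum_succ, extendByZero_of_lt _ hi]

def discreteConvexCone (m : ℕ) : ConvexCone ℝ (Fin m → ℝ) :=
  (ConvexCone.positive ℝ (Fin (m - 2) → ℝ)).comap (D2 m).mulVecLin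

lemma mem_discreteConvexCone {b : Fin m → ℝ} : b ∈ discreteConvexCone m ↔ 0 ≤ D2 m *ᵥ b :=
  Iff.rfl

lemma D2_mulVec_const_one : D2 m *ᵥ (fun _ => 1) = 0 := by
  ext k
  simp only [D2_mulVec, secondDiff, Pi.zero_apply]
  ring

lemma D2_mulVec_val : D2 m *ᵥ (fun i => (i : ℝ)) = 0 := by
  ext k
  simp only [D2_mulVec, secondDiff, Pi.zero_apply]
  push_cast
  ring

def ramp (k : Fin (m - 2)) : Fin m → ℝ := fun i => ((i - (k + 1) : ℕ) : ℝ)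

lemma D2_mulVec_ramp (k : Fin (m - 2)) : D2 m *ᵥ ramp k = Pi.single k 1 := by
  ext j
  rw [D2_mulVec, secondDiff, ramp, ramp, ramp]
  obtain hjk | rfl | hkj := lt_trichotomy j k
  · have h0 : (j : ℕ) + 2 - (k + 1) = 0 := by omega
    have h1 : (j : ℕ) + 1 - (k + 1) = 0 := by omega
    have h2 : (j : ℕ) - (k + 1) = 0 := by omega
    simp [h0, h1, h2, Pi.single_eq_of_ne hjk.ne]
  · have h1 : (j : ℕ) + 2 - (j + 1) = 1 := by omega
    simp [h1, Nat.sub_eq_zero_of_le]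
  · have h1 : (j : ℕ) + 1 - (k + 1) = (j - (k + 1)) + 1 := by omega
    have h2 : (j : ℕ) + 2 - (k + 1) = (j - (k + 1)) + 2 := by omega
    rw [h1, h2, Pi.single_eq_of_ne hkj.ne']
    push_cast
    ring

lemma dotProduct_eq_zero_of_D2_mulVec_eq_zero {s : Fin m → ℝ}
    (h : ∀ d ∈ discreteConvexCone m, 0 ≤ d ⬝ᵥ s) {d : Fin m → ℝ} (hd : D2 m *ᵥ d = 0) :
    d ⬝ᵥ s = 0 := by
  have hneg := h (-d) (by rw [mem_discreteConvexCone, mulVec_neg, hd, neg_zero])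
  have hpos := h d (by rw [mem_discreteConvexCone, hd])
  rw [neg_dotProduct] at hneg
  linarith

theorem dotProduct_eq_D2_mulVec_dotProduct (hm : 3 ≤ m) (d s : Fin m → ℝ)
    (hU : (Cmat m *ᵥ s) ⟨m - 1, Nat.sub_one_lt (by omega)⟩ = 0)
    (hV : (Cmat m *ᵥ (Cmat m *ᵥ s)) ⟨m - 1, Nat.sub_one_lt (by omega)⟩ = 0) :
    d ⬝ᵥ s = (D2 m *ᵥ d) ⬝ᵥ (Cgam m *ᵥ (Cmat m *ᵥ s)) := by
  have hV' := Cmat_mulVec_apply_succ (Cmat m *ᵥ s) (m - 2) (by omega)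
  simp only [show m - 2 + 1 = m - 1 by omega, hV, hU, add_zero] at hV'
  rw [dotProduct_eq_sum_by_parts hm, hU, ← hV']
  ring

theorem forall_mem_discreteConvexCone_dotProduct_nonneg_iff (hm : 3 ≤ m) (s : Fin m → ℝ) :
    (∀ d ∈ discreteConvexCone m, 0 ≤ d ⬝ᵥ s) ↔
      0 ≤ Cgam m *ᵥ (Cmat m *ᵥ s) ∧ (Cmat m *ᵥ s) ⟨m - 1, Nat.sub_one_lt (by omega)⟩ = 0 ∧
        (Cmat m *ᵥ (Cmat m *ᵥ s)) ⟨m - 1, Nat.sub_one_lt (by omega)⟩ = 0 := by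
  constructor
  · intro h
    have hU : (Cmat m *ᵥ s) ⟨m - 1, Nat.sub_one_lt (by omega)⟩ = 0 := by
      have h1 := dotProduct_eq_zero_of_D2_mulVec_eq_zero h D2_mulVec_const_one
      simpa [dotProduct_eq_sum_by_parts hm, D2_mulVec_const_one] using h1
    have hV' : (Cmat m *ᵥ (Cmat m *ᵥ s)) ⟨m - 2, by omega⟩ = 0 := by
      have h1 := dotProduct_eq_zero_of_D2_mulVec_eq_zero h D2_mulVec_val
      have hgap : ((m - 1 : ℕ) : ℝ) - ((m - 2 : ℕ) : ℝ) = 1 := by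
        rw [Nat.cast_sub (by omega), Nat.cast_sub (by omega)]; ring
      simpa [dotProduct_eq_sum_by_parts hm, D2_mulVec_val, hU, hgap] using h1
    have hV : (Cmat m *ᵥ (Cmat m *ᵥ s)) ⟨m - 1, Nat.sub_one_lt (by omega)⟩ = 0 := by
      have h1 := Cmat_mulVec_apply_succ (Cmat m *ᵥ s) (m - 2) (by omega)
      simpa [show m - 2 + 1 = m - 1 by omega, hV', hU] using h1
    refine ⟨fun k => ?_, hU, hV⟩
    have hramp := h (ramp k) (by
      rw [mem_discreteConvexCone, D2_mulVec_ramp]; exact Pi.single_nonneg.2 zero_le_one)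
    rwa [dotProduct_eq_D2_mulVec_dotProduct hm _ _ hU hV, D2_mulVec_ramp,
      single_one_dotProduct] at hramp
  · rintro ⟨hV, hU, hV1⟩ d hd
    rw [dotProduct_eq_D2_mulVec_dotProduct hm d s hU hV1]
    exact dotProduct_nonneg_of_nonneg hd hV

end DiscreteConvexCone

/-- Theorem 2.1. Let `m ≥ 3`, let `Λ` be symmetric positive definite,
`ȳ ∈ ℝ^m`, and `Ω = {b : D₂ b ≥ 0}`.  A vector `b̂ ∈ Ω` minimizes
`g(b) = (1/2) bᵀ Λ b - bᵀ ȳ` over `Ω` if and only if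
`0 ≤ D₂ b̂ ⊥ C_{γ•} C (Λ b̂ - ȳ) ≥ 0`, `C_{m•}(Λ b̂ - ȳ) = 0` and `C_{m•} C (Λ b̂ - ȳ) = 0`. -/
theorem stmt0 (m : ℕ) (hm : 3 ≤ m)
    (Lam : Matrix (Fin m) (Fin m) ℝ) (hsym : Lam.IsSymm) (hpd : Lam.PosDef)
    (ybar : Fin m → ℝ) (bhat : Fin m → ℝ)
    (hmem : ∀ k : Fin (m - 2), 0 ≤ secondDiff bhat k) :
    (∀ b : Fin m → ℝ, (∀ k : Fin (m - 2), 0 ≤ secondDiff b k) →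
        objFun Lam ybar bhat ≤ objFun Lam ybar b)
    ↔ ((∀ k : Fin (m - 2), 0 ≤ (D2 m *ᵥ bhat) k) ∧
       (∀ k : Fin (m - 2), 0 ≤ (Cgam m *ᵥ (Cmat m *ᵥ (Lam *ᵥ bhat - ybar))) k) ∧
       (D2 m *ᵥ bhat) ⬝ᵥ (Cgam m *ᵥ (Cmat m *ᵥ (Lam *ᵥ bhat - ybar))) = 0 ∧
       (fun j => Cmat m ⟨m - 1, by omega⟩ j) ⬝ᵥ (Lam *ᵥ bhat - ybar) = 0 ∧
       (fun j => Cmat m ⟨m - 1, by omega⟩ j) ⬝ᵥ (Cmat m *ᵥ (Lam *ᵥ bhat - ybar)) = 0) := by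
  have hbhat : bhat ∈ discreteConvexCone m := by
    rw [mem_discreteConvexCone, D2_mulVec]
    exact hmem
  have hmin : (∀ b : Fin m → ℝ, (∀ k : Fin (m - 2), 0 ≤ secondDiff b k) →
      objFun Lam ybar bhat ≤ objFun Lam ybar b) ↔
      IsMinOn (objFun Lam ybar) (discreteConvexCone m) bhat := by
    simp only [isMinOn_iff, SetLike.mem_coe, mem_discreteConvexCone, D2_mulVec, Pi.le_def,
      Pi.zero_apply]
  rw [hmin, isMinOn_objFun_iff hsym hpd.posSemidef (discreteConvexCone m).convex hbhat]
  simp only [SetLike.mem_coe]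
  rw [ConvexCone.forall_sub_dotProduct_nonneg_iff hbhat,
    forall_mem_discreteConvexCone_dotProduct_nonneg_iff hm]
  constructor
  · rintro ⟨⟨hV, hU, hV1⟩, hcompl⟩
    exact ⟨hbhat, hV, dotProduct_eq_D2_mulVec_dotProduct hm bhat _ hU hV1 ▸ hcompl, hU, hV1⟩
  · rintro ⟨-, hV, hcompl, hU, hV1⟩
    exact ⟨⟨hV, hU, hV1⟩, (dotProduct_eq_D2_mulVec_dotProduct hm bhat _ hU hV1).trans hcompl⟩
end
end

section
/- For each index set α ⊆ {1,…,K_n+p−2}, the matrix F_α ∈ ℝ^{ℓ×(K_n+p)} with ℓ = K_n+p−|α| has linearly independent rows and F_αΛF_αᵀ is positive definite; moreover, if b̂ is the minimizer of (1/2)bᵀΛb − bᵀȳ over Ω and α = {i : (D₂b̂)_i = 0}, then b̂ = F_αᵀ(F_αΛF_αᵀ)⁻¹F_αȳ. -/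
open Matrix

noncomputable section

/-- Extended knot sequence for degree-`p` B-splines with `K` equispaced interior intervals:
`t_i = 0` for `i ≤ p`, `t_{p+j} = j/K` for `0 ≤ j ≤ K`, `t_i = 1` for `i ≥ K + p`. -/
def knot (K p : ℕ) (i : ℕ) : ℝ := min 1 (max 0 (((i : ℝ) - p) / K))

/-- The B-spline `B_{i,q}` of degree `q` (Cox–de Boor recursion, with the convention that the
last nonempty knot interval is closed at `x = 1`); `Bspline K p q i x = B_{i,q}(x)`. -/
def Bspline (K p : ℕ) : ℕ → ℕ → ℝ → ℝ
  | 0, i, x =>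
      if knot K p i ≤ x ∧ (x < knot K p (i + 1) ∨ (x = 1 ∧ knot K p i < knot K p (i + 1))) then 1
      else 0
  | q + 1, i, x =>
      (x - knot K p i) / (knot K p (i + q + 1) - knot K p i) * Bspline K p q i x +
      (knot K p (i + q + 2) - x) / (knot K p (i + q + 2) - knot K p (i + 1)) * Bspline K p q (i + 1) x

/-- The design matrix `X = [B_k^{[p]}(x_i)]` at the design points `x_i = i/n`, `i = 1,…,n`. -/
def designX (n K p : ℕ) : Matrix (Fin n) (Fin (K + p)) ℝ := fun i k =>
  Bspline K p p k.val ((i.val + 1 : ℝ) / n)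

/-- `β_n = Σ_{i=1}^n (B_{p+1}^{[p]}(x_i))²`. -/
def betan (n K p : ℕ) : ℝ := ∑ i : Fin n, (Bspline K p p p ((i.val + 1 : ℝ) / n)) ^ 2

/-- `Λ = XᵀX / β_n`. -/
def Lam (n K p : ℕ) : Matrix (Fin (K + p)) (Fin (K + p)) ℝ :=
  (betan n K p)⁻¹ • ((designX n K p)ᵀ * designX n K p)

/-- The convex cone `Ω` of coefficient vectors with nonnegative second differences. -/
def cone (m : ℕ) : Set (Fin m → ℝ) := {b | ∀ i : Fin (m - 2), 0 ≤ secondDiff b i}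

/-- `ȳ = Xᵀ y / β_n` for a data vector `y ∈ ℝⁿ`. -/
def ybarOf (n K p : ℕ) (y : Fin n → ℝ) : Fin (K + p) → ℝ :=
  (betan n K p)⁻¹ • ((designX n K p)ᵀ *ᵥ y)

/-- `b` are the coefficients of the convex-constrained B-spline least squares fit to data `y`. -/
def isConstrainedLS (n K p : ℕ) (y : Fin n → ℝ) (b : Fin (K + p) → ℝ) : Prop :=
  b ∈ cone (K + p) ∧ ∀ b' ∈ cone (K + p),
    objFun (Lam n K p) (ybarOf n K p y) b ≤ objFun (Lam n K p) (ybarOf n K p y) b'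

/-- The spline function with coefficient vector `b`. -/
def splineFun (K p : ℕ) (b : Fin (K + p) → ℝ) (x : ℝ) : ℝ :=
  ∑ k : Fin (K + p), b k * Bspline K p p k.val x

/-- The free (breakpoint) coordinates determined by the active set `α`: coordinate `t` is free
iff it is not the middle coordinate of an active second-difference constraint. -/
def freeSet (m : ℕ) (α : Finset (Fin (m - 2))) : Finset (Fin m) :=
  Finset.univ.filter fun t => ∀ i ∈ α, t.val ≠ i.val + 1

/-- The `j`-th free coordinate, in increasing order (`= m` out of range). -/
def freeIdx (m : ℕ) (α : Finset (Fin (m - 2))) (j : ℕ) : ℕ :=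
  if h : j < (freeSet m α).card then (((freeSet m α).orderIsoOfFin rfl) ⟨j, h⟩).1.1 else m

/-- The interpolation matrix `F_α ∈ ℝ^{ℓ×m}`, `ℓ = m - |α|`: its `j`-th row is the
piecewise-linear hat function on the grid of free coordinates which equals `1` at the `j`-th
free coordinate and `0` at all other free coordinates, so that `b = F_αᵀ b̃` recovers a vector
satisfying the active constraints from its free values `b̃`. -/
def Fmat (m : ℕ) (α : Finset (Fin (m - 2))) : Matrix (Fin (freeSet m α).card) (Fin m) ℝ :=
  fun j t =>
    if t.val = freeIdx m α j.val then 1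
    else if freeIdx m α j.val < t.val ∧ t.val < freeIdx m α (j.val + 1) then
      ((freeIdx m α (j.val + 1) : ℝ) - (t.val : ℝ)) /
        ((freeIdx m α (j.val + 1) : ℝ) - (freeIdx m α j.val : ℝ))
    else if 0 < j.val ∧ freeIdx m α (j.val - 1) < t.val ∧ t.val < freeIdx m α j.val then
      ((t.val : ℝ) - (freeIdx m α (j.val - 1) : ℝ)) /
        ((freeIdx m α j.val : ℝ) - (freeIdx m α (j.val - 1) : ℝ))
    else 0


/-!
Between two consecutive free coordinates every active constraint says that a second difference
vanishes, so a vector satisfying the active constraints is the linear interpolation of its values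
at the free coordinates, and `x ↦ x ᵥ* F_α` is exactly this interpolation. It reproduces `x` at
the free coordinates, hence is injective, which gives the independence of the rows of `F_α` and the
positive definiteness of `F_α Λ F_αᵀ`.

At the minimiser `b̂` the inactive constraints are strict, so `b̂ + ε v` stays in `Ω` for small
`|ε|` as soon as `v` satisfies the active constraints, e.g. for every row `v` of `F_α`. The
derivative of the objective in these directions vanishes, which gives the normal equations
`F_α Λ b̂ = F_α ȳ`; substituting `b̂ = F_αᵀ b̃` and solving for `b̃` gives the formula.
-/

open Filter Topology

lemma eq_zero_on_Icc_of_second_difference_eq_zero {v : ℕ → ℝ} {a c : ℕ} (hac : a < c)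
    (ha : v a = 0) (hc : v c = 0)
    (hsd : ∀ s, a ≤ s → s + 2 ≤ c → v s - 2 * v (s + 1) + v (s + 2) = 0)
    {s : ℕ} (h₁ : a ≤ s) (h₂ : s ≤ c) : v s = 0 := by
  have hlin : ∀ k, a + k + 1 ≤ c →
      v (a + k) = k * v (a + 1) ∧ v (a + k + 1) = (k + 1) * v (a + 1) := by
    intro k
    induction k with
    | zero => intro _; simp [ha]
    | succ k ih =>
      intro hk
      obtain ⟨h0, h1⟩ := ih (by omega)
      have := hsd (a + k) (by omega) (by omega)
      rw [show a + (k + 1) = a + k + 1 by omega, show a + k + 1 + 1 = a + k + 2 by omega]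
      push_cast
      constructor <;> linarith
  have hslope : v (a + 1) = 0 := by
    have := (hlin (c - a - 1) (by omega)).2
    rw [show a + (c - a - 1) + 1 = c by omega, hc] at this
    have hpos : (0 : ℝ) < (c - a - 1 : ℕ) + 1 := by positivity
    nlinarith
  rcases h₂.eq_or_lt with rfl | h₂
  · exact hc
  · simpa [hslope, show a + (s - a) = s by omega] using (hlin (s - a) (by omega)).1

section FreeCoordinates

variable {m : ℕ} {α : Finset (Fin (m - 2))}

lemma mem_freeSet {t : Fin m} : t ∈ freeSet m α ↔ ∀ i ∈ α, t.val ≠ i.val + 1 := by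
  simp [freeSet]

lemma card_freeSet : (freeSet m α).card = m - α.card := by
  let succEmb : Fin (m - 2) ↪ Fin m :=
    ⟨fun i => ⟨i.val + 1, by omega⟩, fun a b h => by simpa [Fin.ext_iff] using h⟩
  have : freeSet m α = Finset.univ \ α.map succEmb := by
    ext t
    simp only [mem_freeSet, Finset.mem_sdiff, Finset.mem_univ, true_and, Finset.mem_map,
      not_exists, not_and]
    exact forall₂_congr fun i _ => not_congr (eq_comm.trans (Fin.ext_iff (a := succEmb i)).symm)
  rw [this, Finset.card_sdiff_of_subset (Finset.subset_univ _), Finset.card_map,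
    Finset.card_univ, Fintype.card_fin]

lemma freeIdx_lt {j : ℕ} (h : j < (freeSet m α).card) : freeIdx m α j < m := by
  unfold freeIdx
  rw [dif_pos h]
  exact ((freeSet m α).orderIsoOfFin rfl ⟨j, h⟩).1.isLt

lemma freeIdx_of_le {j : ℕ} (h : (freeSet m α).card ≤ j) : freeIdx m α j = m :=
  dif_neg h.not_gt

lemma freeIdx_mem {j : ℕ} (h : j < (freeSet m α).card) :
    (⟨freeIdx m α j, freeIdx_lt h⟩ : Fin m) ∈ freeSet m α := by
  unfold freeIdx
  simp only [dif_pos h]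
  exact ((freeSet m α).orderIsoOfFin rfl ⟨j, h⟩).2

lemma freeIdx_strictMono {j j' : ℕ} (h : j < j') (h' : j' < (freeSet m α).card) :
    freeIdx m α j < freeIdx m α j' := by
  have hj : j < (freeSet m α).card := h.trans h'
  unfold freeIdx
  rw [dif_pos hj, dif_pos h']
  exact ((freeSet m α).orderIsoOfFin rfl).strictMono
    (show (⟨j, hj⟩ : Fin _) < ⟨j', h'⟩ from h)

lemma freeIdx_monotone : Monotone (freeIdx m α) := by
  intro j j' h
  by_cases h' : j' < (freeSet m α).card
  · rcases h.eq_or_lt with rfl | hlt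
    · exact le_rfl
    · exact (freeIdx_strictMono hlt h').le
  · rw [freeIdx_of_le (not_lt.mp h')]
    by_cases hj : j < (freeSet m α).card
    · exact (freeIdx_lt hj).le
    · rw [freeIdx_of_le (not_lt.mp hj)]

lemma freeIdx_inj {j j' : ℕ} (hj : j < (freeSet m α).card) (hj' : j' < (freeSet m α).card) :
    freeIdx m α j = freeIdx m α j' ↔ j = j' := by
  refine ⟨fun h => ?_, congrArg _⟩
  rcases lt_trichotomy j j' with hlt | heq | hlt
  · exact absurd h (freeIdx_strictMono hlt hj').ne
  · exact heq
  · exact absurd h (freeIdx_strictMono hlt hj).ne'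

lemma freeIdx_succ_sub_freeIdx_ne_zero {j : ℕ} (hj : j + 1 < (freeSet m α).card) :
    ((freeIdx m α (j + 1) : ℝ) - freeIdx m α j) ≠ 0 :=
  sub_ne_zero.mpr (Nat.cast_injective.ne (freeIdx_strictMono (lt_add_one j) hj).ne')

lemma exists_freeIdx_eq {t : Fin m} (ht : t ∈ freeSet m α) :
    ∃ j < (freeSet m α).card, freeIdx m α j = t.val := by
  set j := ((freeSet m α).orderIsoOfFin rfl).symm ⟨t, ht⟩
  refine ⟨j.val, j.isLt, ?_⟩
  unfold freeIdx
  rw [dif_pos j.isLt, Fin.eta, OrderIso.apply_symm_apply]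

lemma zero_mem_freeSet (hm : 0 < m) : (⟨0, hm⟩ : Fin m) ∈ freeSet m α :=
  mem_freeSet.mpr fun i _ h => by simp at h

lemma sub_one_mem_freeSet (hm : 0 < m) : (⟨m - 1, by omega⟩ : Fin m) ∈ freeSet m α :=
  mem_freeSet.mpr fun i _ h => by have := i.isLt; simp only at h; omega

lemma notMem_freeSet_of_between {j : ℕ} {t : Fin m}
    (h₁ : freeIdx m α j < t.val) (h₂ : t.val < freeIdx m α (j + 1)) : t ∉ freeSet m α := by
  intro ht
  obtain ⟨k, -, hk⟩ := exists_freeIdx_eq ht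
  have hjk : j < k := freeIdx_monotone.reflect_lt (hk ▸ h₁)
  have hkj : k < j + 1 := freeIdx_monotone.reflect_lt (hk ▸ h₂)
  omega

lemma exists_between_freeIdx {t : Fin m} (ht : t ∉ freeSet m α) :
    ∃ j, j + 1 < (freeSet m α).card ∧
      freeIdx m α j < t.val ∧ t.val < freeIdx m α (j + 1) := by
  have hm : 0 < m := t.pos
  have hex : ∃ k, t.val < freeIdx m α k :=
    ⟨(freeSet m α).card, by rw [freeIdx_of_le le_rfl]; exact t.isLt⟩
  obtain ⟨k₀, -, hk₀⟩ := exists_freeIdx_eq (zero_mem_freeSet (α := α) hm)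
  obtain ⟨k₁, hk₁, hk₁'⟩ := exists_freeIdx_eq (sub_one_mem_freeSet (α := α) hm)
  have hfind_pos : Nat.find hex ≠ 0 := by
    intro h0
    have := Nat.find_spec hex
    rw [h0] at this
    have := freeIdx_monotone (α := α) (Nat.zero_le k₀)
    simp only at hk₀
    omega
  obtain ⟨j, hj⟩ := Nat.exists_eq_succ_of_ne_zero hfind_pos
  have hlt : t.val < freeIdx m α (j + 1) := by
    rw [← Nat.succ_eq_add_one, ← hj]
    exact Nat.find_spec hex
  have hle : freeIdx m α j ≤ t.val := not_lt.mp (Nat.find_min hex (by omega))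
  have hjcard : j < (freeSet m α).card := by
    by_contra hc
    rw [freeIdx_of_le (not_lt.mp hc)] at hle
    exact absurd t.isLt (not_lt.mpr hle)
  have hne : freeIdx m α j ≠ t.val := fun h =>
    ht ((Fin.ext h : (⟨freeIdx m α j, freeIdx_lt hjcard⟩ : Fin m) = t) ▸ freeIdx_mem hjcard)
  refine ⟨j, ?_, lt_of_le_of_ne hle hne, hlt⟩
  by_contra hc
  have := freeIdx_monotone (α := α) (show k₁ ≤ j by omega)
  simp only at hk₁'
  have := t.isLt
  omega

end FreeCoordinates

section HatMatrix

variable {m : ℕ} {α : Finset (Fin (m - 2))}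

lemma Fmat_apply_freeIdx (j : Fin (freeSet m α).card) {j' : ℕ} (hj' : j' < (freeSet m α).card) :
    Fmat m α j ⟨freeIdx m α j', freeIdx_lt hj'⟩ = if j.val = j' then 1 else 0 := by
  by_cases hjj : j.val = j'
  · rw [if_pos hjj, Fmat, if_pos (by simp [hjj])]
  · have hne : freeIdx m α j' ≠ freeIdx m α j.val := fun h =>
      hjj ((freeIdx_inj hj' j.isLt).mp h).symm
    rw [if_neg hjj, Fmat, if_neg hne, if_neg, if_neg]
    · rintro ⟨hj0, h₁, h₂⟩
      exact notMem_freeSet_of_between h₁ (by rwa [Nat.sub_add_cancel hj0]) (freeIdx_mem hj')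
    · rintro ⟨h₁, h₂⟩
      exact notMem_freeSet_of_between h₁ h₂ (freeIdx_mem hj')

lemma Fmat_apply_of_between {j : ℕ} {t : Fin m}
    (h₁ : freeIdx m α j < t.val) (h₂ : t.val < freeIdx m α (j + 1))
    (j' : Fin (freeSet m α).card) :
    Fmat m α j' t =
      if j'.val = j then
        ((freeIdx m α (j + 1) : ℝ) - t.val) / ((freeIdx m α (j + 1) : ℝ) - freeIdx m α j)
      else if j'.val = j + 1 then
        ((t.val : ℝ) - freeIdx m α j) / ((freeIdx m α (j + 1) : ℝ) - freeIdx m α j)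
      else 0 := by
  have hle : ∀ k, freeIdx m α k < t.val → k ≤ j := fun k hk =>
    Nat.lt_succ_iff.mp (freeIdx_monotone.reflect_lt (hk.trans h₂))
  have hge : ∀ k, t.val < freeIdx m α k → j + 1 ≤ k := fun k hk =>
    freeIdx_monotone.reflect_lt (h₁.trans hk)
  have ht : t.val ≠ freeIdx m α j'.val := fun h =>
    notMem_freeSet_of_between h₁ h₂
      ((Fin.ext h.symm : (⟨_, freeIdx_lt j'.isLt⟩ : Fin m) = t) ▸ freeIdx_mem j'.isLt)
  by_cases hc₁ : j'.val = j
  · simp only [Fmat, hc₁, if_true]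
    rw [if_neg (hc₁ ▸ ht), if_pos ⟨h₁, h₂⟩]
  by_cases hc₂ : j'.val = j + 1
  · simp only [Fmat, hc₂, Nat.add_sub_cancel, if_neg (show j + 1 ≠ j by omega), if_true]
    rw [if_neg (hc₂ ▸ ht), if_neg (fun h => by have := hle _ h.1; omega),
      if_pos ⟨Nat.succ_pos j, h₁, h₂⟩]
  simp only [Fmat, if_neg hc₁, if_neg hc₂]
  rw [if_neg ht, if_neg (fun h => by have := hle _ h.1; have := hge _ h.2; omega),
    if_neg (fun h => by have := hle _ h.2.1; have := hge _ h.2.2; omega)]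

lemma vecMul_Fmat_freeIdx (x : Fin (freeSet m α).card → ℝ) {j : ℕ}
    (hj : j < (freeSet m α).card) :
    (x ᵥ* Fmat m α) ⟨freeIdx m α j, freeIdx_lt hj⟩ = x ⟨j, hj⟩ := by
  simp only [vecMul, dotProduct, Fmat_apply_freeIdx _ hj, mul_ite, mul_one, mul_zero]
  rw [Fintype.sum_eq_single ⟨j, hj⟩ fun k hk => if_neg fun h => hk (Fin.ext h), if_pos rfl]

lemma vecMul_Fmat_of_between (x : Fin (freeSet m α).card → ℝ) {j : ℕ}
    (hj : j + 1 < (freeSet m α).card) {t : Fin m}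
    (h₁ : freeIdx m α j < t.val) (h₂ : t.val < freeIdx m α (j + 1)) :
    (x ᵥ* Fmat m α) t = x ⟨j, by omega⟩ + (x ⟨j + 1, hj⟩ - x ⟨j, by omega⟩) *
      (((t.val : ℝ) - freeIdx m α j) / ((freeIdx m α (j + 1) : ℝ) - freeIdx m α j)) := by
  have hgap := freeIdx_succ_sub_freeIdx_ne_zero (α := α) hj
  simp only [vecMul, dotProduct]
  rw [Fintype.sum_eq_add ⟨j, by omega⟩ ⟨j + 1, hj⟩ (by simp [Fin.ext_iff]) fun k hk => by
      rw [Fmat_apply_of_between h₁ h₂, if_neg (fun h => hk.1 (Fin.ext h)),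
        if_neg (fun h => hk.2 (Fin.ext h)), mul_zero],
    Fmat_apply_of_between h₁ h₂, Fmat_apply_of_between h₁ h₂, if_pos rfl,
    if_neg (show j + 1 ≠ j by omega), if_pos rfl]
  field_simp
  ring

lemma vecMul_Fmat_of_mem_Icc (x : Fin (freeSet m α).card → ℝ) {j : ℕ}
    (hj : j + 1 < (freeSet m α).card) {t : Fin m}
    (h₁ : freeIdx m α j ≤ t.val) (h₂ : t.val ≤ freeIdx m α (j + 1)) :
    (x ᵥ* Fmat m α) t = x ⟨j, by omega⟩ + (x ⟨j + 1, hj⟩ - x ⟨j, by omega⟩) *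
      (((t.val : ℝ) - freeIdx m α j) / ((freeIdx m α (j + 1) : ℝ) - freeIdx m α j)) := by
  have hgap := freeIdx_succ_sub_freeIdx_ne_zero (α := α) hj
  rcases h₁.eq_or_lt with h₁ | h₁
  · rw [show t = ⟨freeIdx m α j, freeIdx_lt (by omega)⟩ from Fin.ext h₁.symm,
      vecMul_Fmat_freeIdx x (show j < _ by omega)]
    simp
  rcases h₂.eq_or_lt with h₂ | h₂
  · rw [show t = ⟨freeIdx m α (j + 1), freeIdx_lt hj⟩ from Fin.ext h₂,
      vecMul_Fmat_freeIdx x hj, div_self hgap]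
    ring
  exact vecMul_Fmat_of_between x hj h₁ h₂

lemma secondDiff_vecMul_Fmat (x : Fin (freeSet m α).card → ℝ) {i : Fin (m - 2)}
    (hi : i ∈ α) :
    secondDiff (x ᵥ* Fmat m α) i = 0 := by
  have hmid : (⟨i.val + 1, by omega⟩ : Fin m) ∉ freeSet m α := fun h =>
    mem_freeSet.mp h i hi rfl
  obtain ⟨j, hj, h₁, h₂⟩ := exists_between_freeIdx hmid
  have hgap := freeIdx_succ_sub_freeIdx_ne_zero (α := α) hj
  simp only at h₁ h₂
  rw [secondDiff, vecMul_Fmat_of_mem_Icc x hj (by simp only; omega) (by simp only; omega),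
    vecMul_Fmat_of_mem_Icc x hj (by simp only; omega) (by simp only; omega),
    vecMul_Fmat_of_mem_Icc x hj (by simp only; omega) (by simp only; omega)]
  push_cast
  field_simp
  ring

lemma vecMul_Fmat_injective : Function.Injective (Fmat m α).vecMul := by
  intro x y h
  funext j
  rw [← vecMul_Fmat_freeIdx x j.isLt, ← vecMul_Fmat_freeIdx y j.isLt,
    show x ᵥ* Fmat m α = y ᵥ* Fmat m α from h]

lemma linearIndependent_Fmat : LinearIndependent ℝ (fun j => Fmat m α j) :=
  vecMul_injective_iff.mp vecMul_Fmat_injective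

lemma posDef_Fmat_mul_mul_transpose {L : Matrix (Fin m) (Fin m) ℝ} (hL : L.PosDef) :
    (Fmat m α * L * (Fmat m α)ᵀ).PosDef := by
  simpa [conjTranspose_eq_transpose_of_trivial] using
    hL.mul_mul_conjTranspose_same vecMul_Fmat_injective

lemma secondDiff_sub (b b' : Fin m → ℝ) (i : Fin (m - 2)) :
    secondDiff (b - b') i = secondDiff b i - secondDiff b' i := by
  simp only [secondDiff, Pi.sub_apply]
  ring

lemma eq_zero_of_secondDiff_eq_zero_of_freeSet {b : Fin m → ℝ}
    (hsd : ∀ i ∈ α, secondDiff b i = 0) (hfree : ∀ t ∈ freeSet m α, b t = 0) : b = 0 := by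
  funext t
  by_cases ht : t ∈ freeSet m α
  · exact hfree t ht
  obtain ⟨j, hj, h₁, h₂⟩ := exists_between_freeIdx ht
  let v : ℕ → ℝ := fun s => if h : s < m then b ⟨s, h⟩ else 0
  have hv : ∀ s (h : s < m), v s = b ⟨s, h⟩ := fun s h => dif_pos h
  have hv_free : ∀ k (hk : k < (freeSet m α).card), v (freeIdx m α k) = 0 := fun k hk =>
    (hv _ (freeIdx_lt hk)).trans (hfree _ (freeIdx_mem hk))
  refine (hv t t.isLt).symm.trans (eq_zero_on_Icc_of_second_difference_eq_zero
    (freeIdx_strictMono (lt_add_one j) hj) (hv_free j (by omega)) (hv_free (j + 1) hj)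
    (fun s hs₁ hs₂ => ?_) h₁.le h₂.le)
  have hcm := freeIdx_lt (α := α) hj
  have hmid : (⟨s + 1, by omega⟩ : Fin m) ∉ freeSet m α :=
    notMem_freeSet_of_between (j := j) (by simp only; omega) (by simp only; omega)
  simp only [mem_freeSet, ne_eq, not_forall, not_not] at hmid
  obtain ⟨i, hi, his⟩ := hmid
  obtain rfl : s = i.val := by omega
  rw [hv _ (by omega), hv _ (by omega), hv _ (by omega)]
  exact hsd i hi

lemma eq_vecMul_Fmat {b : Fin m → ℝ} (hsd : ∀ i ∈ α, secondDiff b i = 0) :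
    b = (fun j : Fin (freeSet m α).card => b ⟨freeIdx m α j, freeIdx_lt j.isLt⟩) ᵥ*
      Fmat m α := by
  rw [← sub_eq_zero]
  refine eq_zero_of_secondDiff_eq_zero_of_freeSet (α := α) (fun i hi => ?_) fun t ht => ?_
  · rw [secondDiff_sub, hsd i hi, secondDiff_vecMul_Fmat _ hi, sub_zero]
  · obtain ⟨j, hj, hjt⟩ := exists_freeIdx_eq ht
    obtain rfl : t = ⟨_, freeIdx_lt hj⟩ := Fin.ext hjt.symm
    rw [Pi.sub_apply, vecMul_Fmat_freeIdx _ hj, sub_self]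

end HatMatrix

section ConeOptimality

variable {m : ℕ}

lemma secondDiff_add_smul (b v : Fin m → ℝ) (ε : ℝ) (i : Fin (m - 2)) :
    secondDiff (b + ε • v) i = secondDiff b i + ε * secondDiff v i := by
  simp only [secondDiff, Pi.add_apply, Pi.smul_apply, smul_eq_mul]
  ring

lemma eventually_add_smul_mem_cone {b v : Fin m → ℝ} (hb : b ∈ cone m)
    (hv : ∀ i, secondDiff b i = 0 → secondDiff v i = 0) :
    ∀ᶠ ε in 𝓝 (0 : ℝ), b + ε • v ∈ cone m := by
  show ∀ᶠ ε in 𝓝 (0 : ℝ), ∀ i, 0 ≤ secondDiff (b + ε • v) i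
  refine eventually_all.mpr fun i => ?_
  simp only [secondDiff_add_smul]
  rcases (hb i).eq_or_lt with h | h
  · exact .of_forall fun ε => by rw [← h, hv i h.symm, mul_zero, add_zero]
  · have hcont : Continuous fun ε : ℝ => secondDiff b i + ε * secondDiff v i := by fun_prop
    have hlim := hcont.tendsto 0
    rw [zero_mul, add_zero] at hlim
    exact (hlim.eventually_const_lt h).mono fun _ => le_of_lt

lemma objFun_add_smul (L : Matrix (Fin m) (Fin m) ℝ) (yb b v : Fin m → ℝ) (ε : ℝ) :
    objFun L yb (b + ε • v) = objFun L yb b +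
      ε * ((1 / 2) * (v ⬝ᵥ L *ᵥ b + b ⬝ᵥ L *ᵥ v) - v ⬝ᵥ yb) +
      ε ^ 2 * ((1 / 2) * (v ⬝ᵥ L *ᵥ v)) := by
  simp only [objFun, mulVec_add, mulVec_smul, dotProduct_add, add_dotProduct, dotProduct_smul,
    smul_dotProduct, smul_eq_mul]
  ring

lemma dotProduct_mulVec_eq_of_isMinOn {L : Matrix (Fin m) (Fin m) ℝ} (hL : Lᵀ = L)
    {S : Set (Fin m → ℝ)} {yb b v : Fin m → ℝ} (hmin : IsMinOn (objFun L yb) S b)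
    (hv : ∀ᶠ ε in 𝓝 (0 : ℝ), b + ε • v ∈ S) : v ⬝ᵥ (L *ᵥ b) = v ⬝ᵥ yb := by
  have hloc : IsLocalMin (fun ε : ℝ => objFun L yb (b + ε • v)) 0 :=
    hv.mono fun ε hε => by simpa using hmin hε
  have hderiv : HasDerivAt (fun ε : ℝ => objFun L yb (b + ε • v))
      ((1 / 2) * (v ⬝ᵥ L *ᵥ b + b ⬝ᵥ L *ᵥ v) - v ⬝ᵥ yb) 0 := by
    rw [funext (objFun_add_smul L yb b v)]
    exact ((((hasDerivAt_id' (0 : ℝ)).mul_const _).const_add _).add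
      ((hasDerivAt_pow 2 (0 : ℝ)).mul_const _)).congr_deriv (by simp)
  have hsymm : b ⬝ᵥ L *ᵥ v = v ⬝ᵥ L *ᵥ b := by
    rw [dotProduct_mulVec, ← mulVec_transpose, hL, dotProduct_comm]
  have := hloc.hasDerivAt_eq_zero hderiv
  rw [hsymm] at this
  linarith

end ConeOptimality

theorem stmt1_general (n K p : ℕ)
    (hpd : (Lam n K p).PosDef)
    (ybar : Fin (K + p) → ℝ) (bhat : Fin (K + p) → ℝ)
    (hmem : bhat ∈ cone (K + p))
    (hmin : ∀ b ∈ cone (K + p), objFun (Lam n K p) ybar bhat ≤ objFun (Lam n K p) ybar b)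
    (α : Finset (Fin (K + p - 2)))
    (hα : ∀ i : Fin (K + p - 2), i ∈ α ↔ secondDiff bhat i = 0) :
    (∀ α' : Finset (Fin (K + p - 2)),
        (freeSet (K + p) α').card = K + p - α'.card ∧
        LinearIndependent ℝ (fun j => Fmat (K + p) α' j) ∧
        (Fmat (K + p) α' * Lam n K p * (Fmat (K + p) α')ᵀ).PosDef) ∧
    bhat = (Fmat (K + p) α)ᵀ *ᵥ
        ((Fmat (K + p) α * Lam n K p * (Fmat (K + p) α)ᵀ)⁻¹ *ᵥ (Fmat (K + p) α *ᵥ ybar)) := by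
  refine ⟨fun _ =>
    ⟨card_freeSet, linearIndependent_Fmat, posDef_Fmat_mul_mul_transpose hpd⟩, ?_⟩
  set F := Fmat (K + p) α
  set L := Lam n K p
  obtain ⟨btil, hrep⟩ : ∃ btil, bhat = btil ᵥ* F :=
    ⟨_, eq_vecMul_Fmat fun i hi => (hα i).mp hi⟩
  have hL : Lᵀ = L := by simpa [conjTranspose_eq_transpose_of_trivial] using hpd.isHermitian.eq
  have hstat : F *ᵥ (L *ᵥ bhat) = F *ᵥ ybar := funext fun j =>
    dotProduct_mulVec_eq_of_isMinOn hL (isMinOn_iff.mpr hmin) <|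
      eventually_add_smul_mem_cone hmem fun i hi => by
        have := secondDiff_vecMul_Fmat (Pi.single j 1) ((hα i).mpr hi)
        rwa [single_one_vecMul] at this
  have hnormal : (F * L * Fᵀ) *ᵥ btil = F *ᵥ ybar := by
    rw [← mulVec_mulVec, ← mulVec_mulVec, mulVec_transpose, ← hrep, hstat]
  have hdet : IsUnit (F * L * Fᵀ).det :=
    (isUnit_iff_isUnit_det _).mp (posDef_Fmat_mul_mul_transpose hpd).isUnit
  rw [← hnormal, mulVec_mulVec btil, nonsing_inv_mul _ hdet, one_mulVec, mulVec_transpose,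
    ← hrep]

/-- Proposition 2.1.  For each index set `α ⊆ {1,…,K_n+p-2}`, the matrix
`F_α ∈ ℝ^{ℓ×(K_n+p)}` with `ℓ = K_n+p-|α|` has linearly independent rows and `F_α Λ F_αᵀ` is
positive definite; moreover, if `b̂` is the minimizer of `(1/2)bᵀΛb - bᵀȳ` over `Ω` and
`α = {i : (D₂b̂)_i = 0}`, then `b̂ = F_αᵀ (F_α Λ F_αᵀ)⁻¹ F_α ȳ`. -/
theorem stmt1 (n K p : ℕ) (hn : 0 < n) (hK : 0 < K) (hdvd : K ∣ n)
    (hpd : (Lam n K p).PosDef)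
    (ybar : Fin (K + p) → ℝ) (bhat : Fin (K + p) → ℝ)
    (hmem : bhat ∈ cone (K + p))
    (hmin : ∀ b ∈ cone (K + p), objFun (Lam n K p) ybar bhat ≤ objFun (Lam n K p) ybar b)
    (α : Finset (Fin (K + p - 2)))
    (hα : ∀ i : Fin (K + p - 2), i ∈ α ↔ secondDiff bhat i = 0) :
    (∀ α' : Finset (Fin (K + p - 2)),
        (freeSet (K + p) α').card = K + p - α'.card ∧
        LinearIndependent ℝ (fun j => Fmat (K + p) α' j) ∧
        (Fmat (K + p) α' * Lam n K p * (Fmat (K + p) α')ᵀ).PosDef) ∧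
    bhat = (Fmat (K + p) α)ᵀ *ᵥ
        ((Fmat (K + p) α * Lam n K p * (Fmat (K + p) α)ᵀ)⁻¹ *ᵥ (Fmat (K + p) α *ᵥ ybar)) :=
  stmt1_general n K p hpd ybar bhat hmem hmin α hα

end
end

section
/- Let Λ ∈ ℝ^{m×m} be symmetric positive definite, let F ∈ ℝ^{ℓ×m} have linearly independent rows, and let Ξ ∈ ℝ^{ℓ×ℓ} be diagonal with strictly positive diagonal entries. Then: (1) all eigenvalues of ΞFΛFᵀ and of ΞFFᵀ are positive real numbers; (2) λ_min(Λ)·λ_min(ΞFFᵀ) ≤ λ_min(ΞFΛFᵀ), and λ_max(ΞFΛFᵀ) ≤ λ_max(Λ)·λ_max(ΞFFᵀ). -/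
/-!
With `g = Ξ^{1/2}` and `B = g F` (full row rank), `Ξ F M Fᵀ = g (B M Fᵀ)` is similar to
`(B M Fᵀ) g = B M Bᵀ`; so `ΞFΛFᵀ` and `ΞFFᵀ` have the spectra of the positive definite matrices
`BΛBᵀ` and `BBᵀ`. For the bounds, `λ_min(Λ) • 1 ≤ Λ ≤ λ_max(Λ) • 1` in the Loewner order;
conjugating by `B` gives `λ_min(Λ) • BBᵀ ≤ BΛBᵀ ≤ λ_max(Λ) • BBᵀ`, and `BBᵀ` is in turn bounded
by `λ_min(BBᵀ) • 1` and `λ_max(BBᵀ) • 1`.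
-/

open Matrix
open scoped MatrixOrder ComplexOrder

theorem spectrum_mul_comm_of_isUnit {R A : Type*} [CommSemiring R] [Ring A] [Algebra R A]
    {g : A} (hg : IsUnit g) (a : A) : spectrum R (g * a) = spectrum R (a * g) := by
  obtain ⟨u, rfl⟩ := hg
  have hconj : (u : A) * (a * u) * ↑u⁻¹ = u * a := by
    rw [mul_assoc, mul_assoc, Units.mul_inv, mul_one]
  rw [← hconj, spectrum.units_conjugate]

theorem spectrum_map_mul_comm_of_isUnit {R A B F : Type*} [CommSemiring R] [Ring A] [Ring B]
    [Algebra R B] [FunLike F A B] [RingHomClass F A B] (f : F) {g : A} (hg : IsUnit g) (a : A) :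
    spectrum R (f (g * a)) = spectrum R (f (a * g)) := by
  rw [map_mul, map_mul]
  exact spectrum_mul_comm_of_isUnit (hg.map f) _

namespace Matrix

variable {n m : Type*} [Fintype n] [Fintype m]

theorem IsHermitian.spectrum_map_complex_subset [DecidableEq n] {A : Matrix n n ℝ}
    (hA : A.IsHermitian) : spectrum ℂ (A.map (algebraMap ℝ ℂ)) ⊆ (↑) '' spectrum ℝ A := by
  have hM : (A.map (algebraMap ℝ ℂ)).IsHermitian :=
    hA.map _ fun _ => (Complex.conj_ofReal _).symm
  rw [hM.spectrum_eq_image_range]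
  rintro _ ⟨_, ⟨i, rfl⟩, rfl⟩
  exact ⟨_, AlgHom.spectrum_apply_subset (Algebra.ofId ℝ ℂ).mapMatrix A
    (hM.eigenvalues_mem_spectrum_real i), rfl⟩

theorem PosDef.spectrum_map_complex [DecidableEq n] {A : Matrix n n ℝ} (hA : A.PosDef) :
    ∀ μ ∈ spectrum ℂ (A.map (algebraMap ℝ ℂ)), μ.im = 0 ∧ 0 < μ.re := by
  intro μ hμ
  obtain ⟨r, hr, rfl⟩ := hA.isHermitian.spectrum_map_complex_subset hμ
  exact ⟨Complex.ofReal_im r, hA.isStrictlyPositive.spectrum_pos hr⟩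

variable {𝕜 : Type*} [RCLike 𝕜]

section Spectrum

variable [DecidableEq n] {A : Matrix n n 𝕜}

theorem IsHermitian.algebraMap_sInf_spectrum_le (hA : A.IsHermitian) :
    algebraMap ℝ _ (sInf (spectrum ℝ A)) ≤ A :=
  (algebraMap_le_iff_le_spectrum (ha := hA.isSelfAdjoint)).2 fun _ hx =>
    csInf_le A.finite_real_spectrum.bddBelow hx

theorem IsHermitian.le_algebraMap_sSup_spectrum (hA : A.IsHermitian) :
    A ≤ algebraMap ℝ _ (sSup (spectrum ℝ A)) :=
  (le_algebraMap_iff_spectrum_le (ha := hA.isSelfAdjoint)).2 fun _ hx =>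
    le_csSup A.finite_real_spectrum.bddAbove hx

theorem IsHermitian.le_sInf_spectrum_of_algebraMap_le [Nonempty n] (hA : A.IsHermitian)
    {r : ℝ} (h : algebraMap ℝ _ r ≤ A) : r ≤ sInf (spectrum ℝ A) :=
  le_csInf (ContinuousFunctionalCalculus.spectrum_nonempty A hA.isSelfAdjoint)
    ((algebraMap_le_iff_le_spectrum (ha := hA.isSelfAdjoint)).1 h)

theorem IsHermitian.sSup_spectrum_le_of_le_algebraMap [Nonempty n] (hA : A.IsHermitian)
    {r : ℝ} (h : A ≤ algebraMap ℝ _ r) : sSup (spectrum ℝ A) ≤ r :=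
  csSup_le (ContinuousFunctionalCalculus.spectrum_nonempty A hA.isSelfAdjoint)
    ((le_algebraMap_iff_spectrum_le (ha := hA.isSelfAdjoint)).1 h)

end Spectrum

theorem mul_mul_conjTranspose_mono {A A' : Matrix m m 𝕜} (h : A ≤ A') (B : Matrix n m 𝕜) :
    B * A * Bᴴ ≤ B * A' * Bᴴ := by
  rw [le_iff, ← Matrix.sub_mul, ← Matrix.mul_sub]
  exact (sub_nonneg.2 h).posSemidef.mul_mul_conjTranspose_same B

omit [Fintype n] in
theorem algebraMap_mul_mul_conjTranspose [DecidableEq m] (r : ℝ) (B : Matrix n m 𝕜) :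
    B * algebraMap ℝ (Matrix m m 𝕜) r * Bᴴ = r • (B * Bᴴ) := by
  rw [Algebra.algebraMap_eq_smul_one, Matrix.mul_smul, Matrix.mul_one, Matrix.smul_mul]

variable [DecidableEq n] [DecidableEq m] [Nonempty n]

theorem PosSemidef.sInf_spectrum_mul_le_sInf_spectrum_mul_mul_conjTranspose
    {A : Matrix m m 𝕜} (hA : A.PosSemidef) (B : Matrix n m 𝕜) :
    sInf (spectrum ℝ A) * sInf (spectrum ℝ (B * Bᴴ)) ≤ sInf (spectrum ℝ (B * A * Bᴴ)) := by
  set a := sInf (spectrum ℝ A)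
  have ha : 0 ≤ a := Real.sInf_nonneg fun _ hx => spectrum_nonneg_of_nonneg hA.nonneg hx
  refine (isHermitian_mul_mul_conjTranspose B hA.isHermitian).le_sInf_spectrum_of_algebraMap_le ?_
  calc algebraMap ℝ _ (a * sInf (spectrum ℝ (B * Bᴴ)))
      = a • algebraMap ℝ _ (sInf (spectrum ℝ (B * Bᴴ))) := by rw [map_mul, Algebra.smul_def]
    _ ≤ a • (B * Bᴴ) :=
        smul_le_smul_of_nonneg_left
          (isHermitian_mul_conjTranspose_self B).algebraMap_sInf_spectrum_le ha
    _ = B * algebraMap ℝ (Matrix m m 𝕜) a * Bᴴ := (algebraMap_mul_mul_conjTranspose a B).symm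
    _ ≤ B * A * Bᴴ := mul_mul_conjTranspose_mono hA.isHermitian.algebraMap_sInf_spectrum_le B

theorem PosSemidef.sSup_spectrum_mul_mul_conjTranspose_le_sSup_spectrum_mul
    {A : Matrix m m 𝕜} (hA : A.PosSemidef) (B : Matrix n m 𝕜) :
    sSup (spectrum ℝ (B * A * Bᴴ)) ≤ sSup (spectrum ℝ A) * sSup (spectrum ℝ (B * Bᴴ)) := by
  set b := sSup (spectrum ℝ A)
  have hb : 0 ≤ b := Real.sSup_nonneg fun _ hx => spectrum_nonneg_of_nonneg hA.nonneg hx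
  refine (isHermitian_mul_mul_conjTranspose B hA.isHermitian).sSup_spectrum_le_of_le_algebraMap ?_
  calc B * A * Bᴴ ≤ B * algebraMap ℝ (Matrix m m 𝕜) b * Bᴴ :=
        mul_mul_conjTranspose_mono hA.isHermitian.le_algebraMap_sSup_spectrum B
    _ = b • (B * Bᴴ) := algebraMap_mul_mul_conjTranspose b B
    _ ≤ b • algebraMap ℝ _ (sSup (spectrum ℝ (B * Bᴴ))) :=
        smul_le_smul_of_nonneg_left
          (isHermitian_mul_conjTranspose_self B).le_algebraMap_sSup_spectrum hb
    _ = algebraMap ℝ _ (b * sSup (spectrum ℝ (B * Bᴴ))) := by rw [map_mul, Algebra.smul_def]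

end Matrix

theorem stmt4_general (m l : ℕ) (hl : 0 < l)
    (Lam : Matrix (Fin m) (Fin m) ℝ) (hpd : Lam.PosDef)
    (F : Matrix (Fin l) (Fin m) ℝ) (hF : LinearIndependent ℝ (fun j => F j))
    (Xi : Matrix (Fin l) (Fin l) ℝ)
    (hXi : ∃ d : Fin l → ℝ, (∀ i, 0 < d i) ∧ Xi = Matrix.diagonal d) :
    (∀ μ ∈ spectrum ℂ ((Xi * F * Lam * Fᵀ).map (algebraMap ℝ ℂ)), μ.im = 0 ∧ 0 < μ.re) ∧
    (∀ μ ∈ spectrum ℂ ((Xi * F * Fᵀ).map (algebraMap ℝ ℂ)), μ.im = 0 ∧ 0 < μ.re) ∧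
    sInf (spectrum ℝ Lam) * sInf (spectrum ℝ (Xi * F * Fᵀ)) ≤
      sInf (spectrum ℝ (Xi * F * Lam * Fᵀ)) ∧
    sSup (spectrum ℝ (Xi * F * Lam * Fᵀ)) ≤
      sSup (spectrum ℝ Lam) * sSup (spectrum ℝ (Xi * F * Fᵀ)) := by
  obtain ⟨d, hd, rfl⟩ := hXi
  have : Nonempty (Fin l) := ⟨⟨0, hl⟩⟩
  set g : Matrix (Fin l) (Fin l) ℝ := diagonal fun i => √(d i)
  have hg : IsUnit g := by
    simpa [g, isUnit_diagonal, Pi.isUnit_iff] using fun i => (Real.sqrt_pos.2 (hd i)).ne'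
  set B := g * F
  have hB : Function.Injective B.vecMul := by
    simpa [B, ← vecMul_vecMul, Function.comp_def] using
      (vecMul_injective_iff.2 hF).comp (vecMul_injective_of_isUnit hg)
  have hsim (M : Matrix (Fin m) (Fin m) ℝ) :
      spectrum ℝ (diagonal d * F * M * Fᵀ) = spectrum ℝ (B * M * Bᴴ) ∧
      spectrum ℂ ((diagonal d * F * M * Fᵀ).map (algebraMap ℝ ℂ)) =
        spectrum ℂ ((B * M * Bᴴ).map (algebraMap ℝ ℂ)) := by
    have hdg : diagonal d = g * g := by
      simp [g, diagonal_mul_diagonal, Real.mul_self_sqrt (hd _).le]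
    have hBt : Bᴴ = Fᵀ * g := by
      simp [B, g, conjTranspose_eq_transpose_of_trivial, transpose_mul]
    rw [show diagonal d * F * M * Fᵀ = g * (B * M * Fᵀ) by simp only [hdg, B, Matrix.mul_assoc],
      show B * M * Bᴴ = B * M * Fᵀ * g by simp only [hBt, Matrix.mul_assoc]]
    exact ⟨spectrum_mul_comm_of_isUnit hg _,
      spectrum_map_mul_comm_of_isUnit (algebraMap ℝ ℂ).mapMatrix hg _⟩
  obtain ⟨hLam, hLamℂ⟩ := hsim Lam
  obtain ⟨hOne, hOneℂ⟩ := hsim 1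
  simp only [Matrix.mul_one] at hOne hOneℂ
  refine ⟨?_, ?_, ?_, ?_⟩
  · rw [hLamℂ]
    exact (hpd.mul_mul_conjTranspose_same hB).spectrum_map_complex
  · rw [hOneℂ]
    exact (PosDef.mul_conjTranspose_self B hB).spectrum_map_complex
  · rw [hLam, hOne]
    exact hpd.posSemidef.sInf_spectrum_mul_le_sInf_spectrum_mul_mul_conjTranspose B
  · rw [hLam, hOne]
    exact hpd.posSemidef.sSup_spectrum_mul_mul_conjTranspose_le_sSup_spectrum_mul B

/-- Proposition 6.1.  Let `Λ ∈ ℝ^{m×m}` be symmetric positive definite,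
`F ∈ ℝ^{ℓ×m}` with linearly independent rows, and `Ξ` diagonal with positive diagonal.
Then all (complex) eigenvalues of `Ξ F Λ Fᵀ` and of `Ξ F Fᵀ` are positive reals, and
`λ_min(Λ)·λ_min(ΞFFᵀ) ≤ λ_min(ΞFΛFᵀ)` and `λ_max(ΞFΛFᵀ) ≤ λ_max(Λ)·λ_max(ΞFFᵀ)`,
where `λ_min`/`λ_max` denote the smallest/largest (real) eigenvalues. -/
theorem stmt4 (m l : ℕ) (hl : 0 < l)
    (Lam : Matrix (Fin m) (Fin m) ℝ) (hsym : Lam.IsSymm) (hpd : Lam.PosDef)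
    (F : Matrix (Fin l) (Fin m) ℝ) (hF : LinearIndependent ℝ (fun j => F j))
    (Xi : Matrix (Fin l) (Fin l) ℝ)
    (hXi : ∃ d : Fin l → ℝ, (∀ i, 0 < d i) ∧ Xi = Matrix.diagonal d) :
    (∀ μ ∈ spectrum ℂ ((Xi * F * Lam * Fᵀ).map (algebraMap ℝ ℂ)), μ.im = 0 ∧ 0 < μ.re) ∧
    (∀ μ ∈ spectrum ℂ ((Xi * F * Fᵀ).map (algebraMap ℝ ℂ)), μ.im = 0 ∧ 0 < μ.re) ∧
    sInf (spectrum ℝ Lam) * sInf (spectrum ℝ (Xi * F * Fᵀ)) ≤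
      sInf (spectrum ℝ (Xi * F * Lam * Fᵀ)) ∧
    sSup (spectrum ℝ (Xi * F * Lam * Fᵀ)) ≤
      sSup (spectrum ℝ Lam) * sSup (spectrum ℝ (Xi * F * Fᵀ)) :=
  stmt4_general m l hl Lam hpd F hF Xi hXi
end

section
/- There exist constants C₄, C₅ > 0 such that sup_{r∈[1,2]} sup_{f∈C_H(r,L)} P(ψ_(r)⁻¹ ‖f̂_(r) − f‖_∞ ≥ 1+√2) ≤ C₄ n⁻¹ and sup_{r∈[1,2]} sup_{f∈C_H(r,L)} E(ψ_(r)⁻² ‖f̂_(r) − f‖_∞²) ≤ C₅, where each f̂_(r) is computed with K_n = K_(r). -/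
open Matrix MeasureTheory ProbabilityTheory

noncomputable section

/-- `g` is the convex-constrained B-spline estimate (as a function) fitted to data `y`. -/
def isCLSfun (n K p : ℕ) (y : Fin n → ℝ) (g : ℝ → ℝ) : Prop :=
  ∃ b : Fin (K + p) → ℝ, isConstrainedLS n K p y b ∧ g = splineFun K p b

/-- The sup-norm distance `‖g - h‖_∞ = sup_{t ∈ [0,1]} |g(t) - h(t)|`. -/
def supDist (g h : ℝ → ℝ) : ℝ := ⨆ t : Set.Icc (0 : ℝ) 1, |g t.1 - h t.1|

/-- The Hölder class `H^r_L` on `[0,1]`: writing `r = ℓ + γ` with `ℓ ∈ ℕ` and `γ ∈ (0,1]`,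
the `ℓ`-th derivative satisfies `|f^{(ℓ)}(x) - f^{(ℓ)}(y)| ≤ L |x-y|^γ`. -/
def memHolder (r L : ℝ) (f : ℝ → ℝ) : Prop :=
  ∃ l : ℕ, ∃ γ : ℝ, 0 < γ ∧ γ ≤ 1 ∧ (l : ℝ) + γ = r ∧
    ContDiffOn ℝ l f (Set.Icc 0 1) ∧
    ∀ x ∈ Set.Icc (0 : ℝ) 1, ∀ y ∈ Set.Icc (0 : ℝ) 1,
      |iteratedDerivWithin l f (Set.Icc 0 1) x - iteratedDerivWithin l f (Set.Icc 0 1) y| ≤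
        L * |x - y| ^ γ

/-- The class `C_H(r,L)` of convex functions on `[0,1]` in the Hölder class `H^r_L`. -/
def memCH (r L : ℝ) (f : ℝ → ℝ) : Prop :=
  ConvexOn ℝ (Set.Icc (0 : ℝ) 1) f ∧ memHolder r L f

/-- The spline degree used for the estimator `f̂_(r)`: `p = ⌈r-1⌉`, with `p = 1` when `r = 1`. -/
def degOf (r : ℝ) : ℕ := max 1 ⌈r - 1⌉₊

/-- The vector of noise-free data `(f(x_1),…,f(x_n))`, `x_i = i/n`. -/
def noiseFree (n : ℕ) (f : ℝ → ℝ) : Fin n → ℝ := fun i => f ((i.val + 1 : ℝ) / n)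

/-- The observation vector `y_i = f(x_i) + σ ε_i`, `x_i = i/n`, at sample point `ω`. -/
def yData (n : ℕ) (sig : ℝ) (f : ℝ → ℝ) {Ωs : Type} (e : Fin n → Ωs → ℝ) (ω : Ωs) :
    Fin n → ℝ := fun i => f ((i.val + 1 : ℝ) / n) + sig * e i ω

/-- `τ_n = ⌈(log n)^{1/2}⌉`. -/
def tauOf (n : ℕ) : ℕ := ⌈Real.sqrt (Real.log n)⌉₊

/-- The grid points `r_j = 1 + j/τ_n`. -/
def rgrid (n j : ℕ) : ℝ := 1 + (j : ℝ) / tauOf n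

/-- The optimal number of knots
`K_(s) = (C₂/(C₁ s √(2(2s+1))))^{-2/(2s+1)} (σ/L)^{-2/(2s+1)} (log n/n)^{-1/(2s+1)}`. -/
def Kform (n : ℕ) (L sig C1 C2 s : ℝ) : ℝ :=
  (C2 / (C1 * s * Real.sqrt (2 * (2 * s + 1)))) ^ (-(2 / (2 * s + 1))) *
    (sig / L) ^ (-(2 / (2 * s + 1))) * (Real.log n / n) ^ (-(1 / (2 * s + 1)))

/-- The optimal rate `ψ_(s) = C₁ L K_(s)^{-s} + √(2/(2s+1)) C₂ σ √(K_(s) log n / n)`. -/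
def psiform (n : ℕ) (L sig C1 C2 s : ℝ) : ℝ :=
  C1 * L * Kform n L sig C1 C2 s ^ (-s) +
    Real.sqrt (2 / (2 * s + 1)) * C2 * sig * Real.sqrt (Kform n L sig C1 C2 s * Real.log n / n)

/-!
The knot number `K_(r)` balances the two terms of `ψ_(r)`: the noise term equals `2r` times the
bias term `C₁ L K_(r)^{-r}`, so `ψ_(r) = (2r+1) C₁ L K_(r)^{-r}`. By the triangle inequality
through `f̄_(r)`, the event `ψ_(r)⁻¹ ‖f̂_(r) - f‖_∞ ≥ t` forces `‖f̂_(r) - f̄_(r)‖_∞` to exceed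
`v` times the noise term whenever `2rv ≤ (2r+1)t - 1`, and the exponential tail bound turns this
into probability at most `D n^{(1 - v²)/(2r+1)}`, where `K_(r) + 1 ≤ D n^{1/(2r+1)}`.
The choice `t = 1 + √2`, `v = 5/2` gives `D/n`; the choice `t = v = 1 + j` gives tails
`D 2^{-j/5}`, which are summable against `(j + 2)²` and so bound the second moment.
-/

lemma knot_mem_Icc (K p i : ℕ) : knot K p i ∈ Set.Icc (0 : ℝ) 1 :=
  ⟨le_min zero_le_one (le_max_left _ _), min_le_left _ _⟩

lemma abs_div_mul_le {y d B M : ℝ} (hy : |y| ≤ 1) (hB : |B| ≤ M) : |y / d * B| ≤ M / |d| := by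
  rw [abs_mul, abs_div, div_mul_eq_mul_div]
  gcongr
  exact (mul_le_of_le_one_left (abs_nonneg B) hy).trans hB

lemma exists_abs_Bspline_le (K p q i : ℕ) :
    ∃ M, ∀ x ∈ Set.Icc (0 : ℝ) 1, |Bspline K p q i x| ≤ M := by
  induction q generalizing i with
  | zero => exact ⟨1, fun x _ => by rw [Bspline]; split_ifs <;> simp⟩
  | succ q ih =>
    obtain ⟨M₁, hM₁⟩ := ih i
    obtain ⟨M₂, hM₂⟩ := ih (i + 1)
    refine ⟨M₁ / |knot K p (i + q + 1) - knot K p i| +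
      M₂ / |knot K p (i + q + 2) - knot K p (i + 1)|, fun x hx => ?_⟩
    obtain ⟨h0, h1⟩ := knot_mem_Icc K p i
    obtain ⟨h2, h3⟩ := knot_mem_Icc K p (i + q + 2)
    rw [Bspline]
    exact (abs_add_le _ _).trans (add_le_add
      (abs_div_mul_le (abs_sub_le_of_nonneg_of_le hx.1 hx.2 h0 h1) (hM₁ x hx))
      (abs_div_mul_le (abs_sub_le_of_nonneg_of_le h2 h3 hx.1 hx.2) (hM₂ x hx)))

lemma exists_abs_splineFun_le (K p : ℕ) (b : Fin (K + p) → ℝ) :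
    ∃ M, ∀ x ∈ Set.Icc (0 : ℝ) 1, |splineFun K p b x| ≤ M := by
  choose M hM using fun k : Fin (K + p) => exists_abs_Bspline_le K p p k
  refine ⟨∑ k, |b k| * M k, fun x hx => ?_⟩
  refine (Finset.abs_sum_le_sum_abs _ _).trans (Finset.sum_le_sum fun k _ => ?_)
  rw [abs_mul]
  exact mul_le_mul_of_nonneg_left (hM k x hx) (abs_nonneg _)

lemma exists_abs_le_of_isCLSfun {n K p : ℕ} {y : Fin n → ℝ} {g : ℝ → ℝ}
    (hg : isCLSfun n K p y g) : ∃ M, ∀ x ∈ Set.Icc (0 : ℝ) 1, |g x| ≤ M := by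
  obtain ⟨b, -, rfl⟩ := hg
  exact exists_abs_splineFun_le K p b

lemma exists_abs_le_of_memCH {r L : ℝ} {f : ℝ → ℝ} (hf : memCH r L f) :
    ∃ M, ∀ x ∈ Set.Icc (0 : ℝ) 1, |f x| ≤ M := by
  obtain ⟨-, _, _, -, -, -, hf, -⟩ := hf
  exact isCompact_Icc.exists_bound_of_continuousOn hf.continuousOn

lemma supDist_nonneg (g h : ℝ → ℝ) : 0 ≤ supDist g h :=
  Real.iSup_nonneg fun _ => abs_nonneg _

lemma abs_sub_le_supDist {g h : ℝ → ℝ} (hg : ∃ M, ∀ x ∈ Set.Icc (0 : ℝ) 1, |g x| ≤ M)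
    (hh : ∃ M, ∀ x ∈ Set.Icc (0 : ℝ) 1, |h x| ≤ M) (t : Set.Icc (0 : ℝ) 1) :
    |g t - h t| ≤ supDist g h := by
  obtain ⟨M, hM⟩ := hg
  obtain ⟨N, hN⟩ := hh
  refine le_ciSup (f := fun s : Set.Icc (0 : ℝ) 1 => |g s - h s|) ⟨M + N, ?_⟩ t
  rintro _ ⟨s, rfl⟩
  exact (abs_sub _ _).trans (add_le_add (hM s s.2) (hN s s.2))

lemma supDist_triangle {g m h : ℝ → ℝ} (hg : ∃ M, ∀ x ∈ Set.Icc (0 : ℝ) 1, |g x| ≤ M)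
    (hm : ∃ M, ∀ x ∈ Set.Icc (0 : ℝ) 1, |m x| ≤ M) (hh : ∃ M, ∀ x ∈ Set.Icc (0 : ℝ) 1, |h x| ≤ M) :
    supDist g h ≤ supDist g m + supDist m h :=
  Real.iSup_le (fun t => (abs_sub_le _ _ _).trans
      (add_le_add (abs_sub_le_supDist hg hm t) (abs_sub_le_supDist hm hh t)))
    (add_nonneg (supDist_nonneg _ _) (supDist_nonneg _ _))

lemma rpow_le_one_add {x e : ℝ} (hx : 0 ≤ x) (he0 : 0 ≤ e) (he1 : e ≤ 1) : x ^ e ≤ 1 + x := by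
  rcases le_total x 1 with h | h
  · linarith [Real.rpow_le_one hx h he0]
  · linarith [Real.rpow_le_self_of_one_le h he1]

section Kform

variable {n : ℕ} {L sig C1 C2 r : ℝ}

lemma Kform_pos (hn : 2 ≤ n) (hL : 0 < L) (hsig : 0 < sig) (hC1 : 0 < C1) (hC2 : 0 < C2)
    (hr : 0 < r) : 0 < Kform n L sig C1 C2 r := by
  have : 0 < Real.log n := Real.log_pos (by exact_mod_cast hn)
  unfold Kform
  positivity

lemma Kform_rpow_mul_log_div (hn : 2 ≤ n) (hL : 0 < L) (hsig : 0 < sig) (hC1 : 0 < C1)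
    (hC2 : 0 < C2) (hr : 0 < r) :
    Kform n L sig C1 C2 r ^ (2 * r + 1) * (Real.log n / n) =
      (C1 * r * √(2 * (2 * r + 1)) * L / (C2 * sig)) ^ 2 := by
  have hlog : 0 < Real.log n := Real.log_pos (by exact_mod_cast hn)
  have hg : 0 < Real.log n / n := by positivity
  have hc : 0 < C2 / (C1 * r * √(2 * (2 * r + 1))) := by positivity
  have e2 : -(2 / (2 * r + 1)) * (2 * r + 1) = -2 := by field_simp
  have e1 : -(1 / (2 * r + 1)) * (2 * r + 1) = -1 := by field_simp
  rw [Kform, Real.mul_rpow (by positivity) (by positivity),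
    Real.mul_rpow (by positivity) (by positivity), ← Real.rpow_mul hc.le,
    ← Real.rpow_mul (by positivity), ← Real.rpow_mul hg.le, e2, e1,
    Real.rpow_neg_one, Real.rpow_neg hc.le, Real.rpow_neg (by positivity), Real.rpow_two,
    Real.rpow_two]
  field_simp

lemma noise_eq_two_mul_bias (hn : 2 ≤ n) (hL : 0 < L) (hsig : 0 < sig) (hC1 : 0 < C1)
    (hC2 : 0 < C2) (hr : 0 < r) :
    √(2 / (2 * r + 1)) * C2 * sig * √(Kform n L sig C1 C2 r * Real.log n / n) =
      2 * r * (C1 * L * Kform n L sig C1 C2 r ^ (-r)) := by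
  have hK := Kform_pos hn hL hsig hC1 hC2 hr
  have hKg := Kform_rpow_mul_log_div hn hL hsig hC1 hC2 hr
  set K := Kform n L sig C1 C2 r
  have hKK : (K ^ (-r)) ^ 2 * K ^ (2 * r + 1) = K := by
    rw [← Real.rpow_natCast, ← Real.rpow_mul hK.le, ← Real.rpow_add hK]
    norm_num [show -(r * 2) + (2 * r + 1) = 1 by ring]
  have hlog : 0 ≤ Real.log n := Real.log_nonneg (by exact_mod_cast (by omega : 1 ≤ n))
  refine (pow_left_inj₀ (by positivity) (by positivity) two_ne_zero).1 ?_
  calc (√(2 / (2 * r + 1)) * C2 * sig * √(K * Real.log n / n)) ^ 2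
      = 2 / (2 * r + 1) * C2 ^ 2 * sig ^ 2 * ((K ^ (-r)) ^ 2 *
          (K ^ (2 * r + 1) * (Real.log n / n))) := by
        rw [mul_pow, mul_pow, mul_pow, Real.sq_sqrt (by positivity), Real.sq_sqrt (by positivity),
          ← mul_assoc _ (K ^ (2 * r + 1)), hKK, mul_div_assoc]
    _ = (2 * r * (C1 * L * K ^ (-r))) ^ 2 := by
        rw [hKg, div_pow, mul_pow, mul_pow, Real.sq_sqrt (by positivity)]
        field_simp

lemma exists_Kform_add_one_le (hL : 0 < L) (hsig : 0 < sig) (hC1 : 0 < C1) (hC2 : 0 < C2) :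
    ∃ D > 0, ∀ n : ℕ, 2 ≤ n → ∀ r : ℝ, 1 ≤ r → r ≤ 2 →
      Kform n L sig C1 C2 r + 1 ≤ D * (n : ℝ) ^ (1 / (2 * r + 1)) := by
  refine ⟨2 * (C1 * 2 * √10 * L / (C2 * sig)) ^ 2 + 2, by positivity, fun n hn r hr1 hr2 => ?_⟩
  have hr : 0 < r := by linarith
  have hK := Kform_pos hn hL hsig hC1 hC2 hr
  have hKg := Kform_rpow_mul_log_div hn hL hsig hC1 hC2 hr
  have hB : C1 * r * √(2 * (2 * r + 1)) * L / (C2 * sig) ≤ C1 * 2 * √10 * L / (C2 * sig) := by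
    gcongr
    linarith
  generalize C1 * 2 * √10 * L / (C2 * sig) = A at hB ⊢
  generalize Kform n L sig C1 C2 r = K at hK hKg ⊢
  have hn1 : (1 : ℝ) ≤ n := by exact_mod_cast (by omega : 1 ≤ n)
  have hlog : 1 / 2 ≤ Real.log n := by
    have := Real.log_le_log two_pos (by exact_mod_cast hn : (2 : ℝ) ≤ n)
    linarith [Real.log_two_gt_d9]
  have he0 : 0 ≤ 1 / (2 * r + 1) := by positivity
  have he1 : 1 / (2 * r + 1) ≤ 1 := by rw [div_le_one (by linarith)]; linarith
  have hpow : K ^ (2 * r + 1) ≤ 2 * A ^ 2 * n := by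
    rw [← div_eq_of_eq_mul (by positivity) hKg.symm, div_div_eq_mul_div,
      div_le_iff₀ (by linarith)]
    have hB2 := mul_le_mul_of_nonneg_right (pow_le_pow_left₀ (by positivity) hB 2)
      (by positivity : (0 : ℝ) ≤ n)
    nlinarith [mul_nonneg (by positivity : 0 ≤ A ^ 2 * n) (by linarith : 0 ≤ 2 * Real.log n - 1)]
  have hroot : K = (K ^ (2 * r + 1)) ^ (1 / (2 * r + 1)) := by
    rw [one_div, Real.rpow_rpow_inv hK.le (by linarith)]
  calc K + 1 ≤ (2 * A ^ 2 * n) ^ (1 / (2 * r + 1)) + (n : ℝ) ^ (1 / (2 * r + 1)) := by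
        rw [hroot]
        gcongr
        exact Real.one_le_rpow hn1 he0
    _ ≤ (1 + 2 * A ^ 2) * (n : ℝ) ^ (1 / (2 * r + 1)) + (n : ℝ) ^ (1 / (2 * r + 1)) := by
        rw [Real.mul_rpow (by positivity) (by positivity)]
        gcongr
        exact rpow_le_one_add (by positivity) he0 he1
    _ = (2 * A ^ 2 + 2) * (n : ℝ) ^ (1 / (2 * r + 1)) := by ring

end Kform

lemma rpow_one_sub_sq_div_le_inv {x r : ℝ} (hx : 1 ≤ x) (hr0 : 0 ≤ r) (hr : r ≤ 2) :
    x ^ ((1 - (5 / 2 : ℝ) ^ 2) / (2 * r + 1)) ≤ x⁻¹ := by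
  rw [← Real.rpow_neg_one]
  refine Real.rpow_le_rpow_of_exponent_le hx ?_
  rw [div_le_iff₀ (by linarith)]
  linarith

lemma rpow_one_sub_sq_div_le_geometric {x r : ℝ} (hx : 2 ≤ x) (hr0 : 0 ≤ r) (hr : r ≤ 2)
    (j : ℕ) : x ^ ((1 - (1 + j : ℝ) ^ 2) / (2 * r + 1)) ≤ (2 ^ (-(1 / 5 : ℝ))) ^ j := by
  have hj : (0 : ℝ) ≤ j := j.cast_nonneg
  calc x ^ ((1 - (1 + j : ℝ) ^ 2) / (2 * r + 1)) ≤ x ^ (-(j / 5 : ℝ)) := by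
        refine Real.rpow_le_rpow_of_exponent_le (by linarith) ?_
        rw [div_le_iff₀ (by linarith)]
        nlinarith
    _ ≤ 2 ^ (-(j / 5 : ℝ)) := Real.rpow_le_rpow_of_nonpos two_pos hx (by linarith)
    _ = (2 ^ (-(1 / 5 : ℝ))) ^ j := by
        rw [← Real.rpow_natCast, ← Real.rpow_mul zero_le_two]
        ring_nf

section Tail

variable {Ω : Type*} [MeasurableSpace Ω] {μ : Measure Ω}

lemma measure_le_rpow_of_tail {n Kr : ℕ} {L sig C1 C2 r D : ℝ} (hn : 2 ≤ n) (hL : 0 < L)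
    (hsig : 0 < sig) (hC1 : 0 < C1) (hC2 : 0 < C2) (hr : 0 < r) (hKr0 : 0 < Kr)
    (hKr : (Kr : ℝ) = Kform n L sig C1 C2 r) (hD : (Kr : ℝ) + 1 ≤ D * (n : ℝ) ^ (1 / (2 * r + 1)))
    {Y Z : Ω → ℝ} (hYZ : ∀ ω, Y ω ≤ Z ω + C1 * L * (Kr : ℝ) ^ (-r))
    (htail : ∀ u : ℝ, 0 < u → μ {ω | u ≤ Z ω} ≤
      ENNReal.ofReal (((Kr : ℝ) + 1) *
        Real.exp (-((n : ℝ) * u ^ 2) / (2 * Kr * C2 ^ 2 * sig ^ 2))))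
    ⦃t v : ℝ⦄ (hv : 0 < v) (htv : 2 * r * v ≤ t * (2 * r + 1) - 1) :
    μ {ω | t ≤ (psiform n L sig C1 C2 r)⁻¹ * Y ω} ≤
      ENNReal.ofReal (D * (n : ℝ) ^ ((1 - v ^ 2) / (2 * r + 1))) := by
  have hn0 : (0 : ℝ) < n := by positivity
  have hs := noise_eq_two_mul_bias hn hL hsig hC1 hC2 hr
  have hψ : psiform n L sig C1 C2 r = (2 * r + 1) * (C1 * L * Kform n L sig C1 C2 r ^ (-r)) := by
    rw [psiform, hs]
    ring
  rw [← hKr] at hs hψ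
  set b := C1 * L * (Kr : ℝ) ^ (-r)
  set s := √(2 / (2 * r + 1)) * C2 * sig * √((Kr : ℝ) * Real.log n / n)
  have hb : 0 < b := by positivity
  have hsub : {ω | t ≤ (psiform n L sig C1 C2 r)⁻¹ * Y ω} ⊆ {ω | v * s ≤ Z ω} := by
    intro ω (hω : t ≤ (psiform n L sig C1 C2 r)⁻¹ * Y ω)
    rw [hψ, le_inv_mul_iff₀ (by positivity)] at hω
    show v * s ≤ Z ω
    rw [hs]
    nlinarith [hYZ ω, mul_le_mul_of_nonneg_right htv hb.le]
  have hexp : (n : ℝ) * (v * s) ^ 2 / (2 * Kr * C2 ^ 2 * sig ^ 2) =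
      Real.log n * (v ^ 2 / (2 * r + 1)) := by
    have hlog : 0 ≤ Real.log n := Real.log_nonneg (by exact_mod_cast (by omega : 1 ≤ n))
    rw [mul_pow, mul_pow, mul_pow, mul_pow, Real.sq_sqrt (by positivity),
      Real.sq_sqrt (by positivity)]
    field_simp
  calc μ {ω | t ≤ (psiform n L sig C1 C2 r)⁻¹ * Y ω}
      ≤ μ {ω | v * s ≤ Z ω} := measure_mono hsub
    _ ≤ ENNReal.ofReal (((Kr : ℝ) + 1) * (n : ℝ) ^ (-(v ^ 2 / (2 * r + 1)))) := by
        rw [Real.rpow_def_of_pos hn0, mul_neg, ← hexp, ← neg_div]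
        exact htail _ (by rw [hs]; positivity)
    _ ≤ ENNReal.ofReal (D * (n : ℝ) ^ ((1 - v ^ 2) / (2 * r + 1))) := by
        refine ENNReal.ofReal_le_ofReal ?_
        calc ((Kr : ℝ) + 1) * (n : ℝ) ^ (-(v ^ 2 / (2 * r + 1)))
            ≤ D * (n : ℝ) ^ (1 / (2 * r + 1)) * (n : ℝ) ^ (-(v ^ 2 / (2 * r + 1))) := by gcongr
          _ = D * (n : ℝ) ^ ((1 - v ^ 2) / (2 * r + 1)) := by
            rw [mul_assoc, ← Real.rpow_add hn0]
            ring_nf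

lemma summable_sq_mul_geometric {a ρ : ℝ} (hρ0 : 0 ≤ ρ) (hρ1 : ρ < 1) :
    Summable fun j : ℕ => (a + j + 1) ^ 2 * ρ ^ j := by
  have hρ : ‖ρ‖ < 1 := by rwa [Real.norm_of_nonneg hρ0]
  refine (((summable_pow_mul_geometric_of_norm_lt_one 0 hρ).mul_left ((a + 1) ^ 2)).add
    (((summable_pow_mul_geometric_of_norm_lt_one 1 hρ).mul_left (2 * (a + 1))).add
      (summable_pow_mul_geometric_of_norm_lt_one 2 hρ))).congr fun j => ?_
  ring

/-- Only the layer `a + j ≤ X ω < a + j + 1` is charged; `toMeasurable` spares a measurability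
assumption on `X`. -/
lemma ofReal_sq_le_add_tsum_indicator {X : Ω → ℝ} (hX : ∀ ω, 0 ≤ X ω) (a : ℝ) (ω : Ω) :
    ENNReal.ofReal (X ω ^ 2) ≤ ENNReal.ofReal (a ^ 2) + ∑' j : ℕ,
      (toMeasurable μ {ω | a + j ≤ X ω}).indicator (fun _ => ENNReal.ofReal ((a + j + 1) ^ 2)) ω := by
  rcases le_or_gt (X ω) a with h | h
  · exact le_add_right (ENNReal.ofReal_le_ofReal (pow_le_pow_left₀ (hX ω) h 2))
  · set j := ⌊X ω - a⌋₊
    have hj1 : a + j ≤ X ω := by linarith [Nat.floor_le (by linarith : 0 ≤ X ω - a)]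
    have hj2 : X ω ≤ a + j + 1 := by linarith [Nat.lt_floor_add_one (X ω - a)]
    refine le_add_left (le_trans ?_ (ENNReal.le_tsum j))
    rw [Set.indicator_of_mem (subset_toMeasurable μ _ hj1)]
    exact ENNReal.ofReal_le_ofReal (pow_le_pow_left₀ (hX ω) hj2 2)

theorem integral_sq_le_of_measure_le_geometric [IsProbabilityMeasure μ] {X : Ω → ℝ}
    (hX : ∀ ω, 0 ≤ X ω) {a C ρ : ℝ} (hC : 0 ≤ C) (hρ0 : 0 ≤ ρ) (hρ1 : ρ < 1)
    (htail : ∀ j : ℕ, μ {ω | a + j ≤ X ω} ≤ ENNReal.ofReal (C * ρ ^ j)) :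
    ∫ ω, X ω ^ 2 ∂μ ≤ a ^ 2 + C * ∑' j : ℕ, (a + j + 1) ^ 2 * ρ ^ j := by
  have hsum := (summable_sq_mul_geometric (a := a) hρ0 hρ1).mul_left C
  have hlint : ∫⁻ ω, ENNReal.ofReal (X ω ^ 2) ∂μ ≤
      ENNReal.ofReal (a ^ 2 + ∑' j : ℕ, C * ((a + j + 1) ^ 2 * ρ ^ j)) := by
    calc ∫⁻ ω, ENNReal.ofReal (X ω ^ 2) ∂μ
        ≤ ∫⁻ ω, (ENNReal.ofReal (a ^ 2) + ∑' j : ℕ, (toMeasurable μ {ω | a + j ≤ X ω}).indicator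
            (fun _ => ENNReal.ofReal ((a + j + 1) ^ 2)) ω) ∂μ :=
          lintegral_mono (ofReal_sq_le_add_tsum_indicator hX a)
      _ = ENNReal.ofReal (a ^ 2) + ∑' j : ℕ,
            ENNReal.ofReal ((a + j + 1) ^ 2) * μ {ω | a + j ≤ X ω} := by
          rw [lintegral_add_left measurable_const, lintegral_const, measure_univ, mul_one,
            lintegral_tsum fun j => (measurable_const.indicator
              (measurableSet_toMeasurable μ _)).aemeasurable]
          simp_rw [lintegral_indicator_const (measurableSet_toMeasurable μ _), measure_toMeasurable]
      _ ≤ ENNReal.ofReal (a ^ 2) + ∑' j : ℕ, ENNReal.ofReal (C * ((a + j + 1) ^ 2 * ρ ^ j)) := by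
          gcongr with j
          rw [mul_left_comm, ENNReal.ofReal_mul (by positivity)]
          exact mul_le_mul_right (htail j) _
      _ = _ := by
          rw [← ENNReal.ofReal_tsum_of_nonneg (fun j => by positivity) hsum,
            ENNReal.ofReal_add (by positivity) (tsum_nonneg fun j => by positivity)]
  rw [← tsum_mul_left]
  calc ∫ ω, X ω ^ 2 ∂μ ≤ ‖∫ ω, X ω ^ 2 ∂μ‖ := Real.le_norm_self _
    _ ≤ (∫⁻ ω, ENNReal.ofReal ‖X ω ^ 2‖ ∂μ).toReal := norm_integral_le_lintegral_norm _
    _ ≤ _ := by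
        refine ENNReal.toReal_le_of_le_ofReal (by positivity) ?_
        simpa only [Real.norm_eq_abs, abs_pow, abs_of_nonneg (hX _)] using hlint

end Tail

/-- Lemma 7.3.  There are `C₄, C₅ > 0` such that, uniformly over
`r ∈ [1,2]` and `f ∈ C_H(r,L)`, the estimator `f̂_(r)` computed with `K_n = K_(r)` satisfies
`P(ψ_(r)⁻¹‖f̂_(r) - f‖_∞ ≥ 1+√2) ≤ C₄ n⁻¹` and `E(ψ_(r)⁻²‖f̂_(r) - f‖_∞²) ≤ C₅`. -/
theorem stmt14 (L sig C1 C2 : ℝ) (hL : 0 < L) (hsig : 0 < sig) (hC1 : 0 < C1) (hC2 : 0 < C2) :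
    ∃ C4 C5 : ℝ, 0 < C4 ∧ 0 < C5 ∧
      ∀ n : ℕ, 2 ≤ n →
      ∀ r : ℝ, 1 ≤ r → r ≤ 2 →
      ∀ Kr : ℕ, 0 < Kr → (Kr : ℝ) = Kform n L sig C1 C2 r →
      ∀ f : ℝ → ℝ, memCH r L f →
      ∀ (Ωs : Type) (_ : MeasurableSpace Ωs) (μ : Measure Ωs), IsProbabilityMeasure μ →
      ∀ e : Fin n → Ωs → ℝ,
        iIndepFun e μ →
        (∀ i, μ.map (e i) = gaussianReal 0 1) →
      ∀ fhat : Ωs → ℝ → ℝ,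
        (∀ ω, isCLSfun n Kr (degOf r) (yData n sig f e ω) (fhat ω)) →
      ∀ fbar : ℝ → ℝ, isCLSfun n Kr (degOf r) (noiseFree n f) fbar →
        supDist fbar f ≤ C1 * L * (Kr : ℝ) ^ (-r) →
        (∀ u : ℝ, 0 < u →
          μ {ω | u ≤ supDist (fhat ω) fbar} ≤
            ENNReal.ofReal (((Kr : ℝ) + 1) *
              Real.exp (-((n : ℝ) * u ^ 2) / (2 * Kr * C2 ^ 2 * sig ^ 2)))) →
        μ {ω | 1 + Real.sqrt 2 ≤ (psiform n L sig C1 C2 r)⁻¹ * supDist (fhat ω) f} ≤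
            ENNReal.ofReal (C4 / n) ∧
        (∫ ω, ((psiform n L sig C1 C2 r)⁻¹ * supDist (fhat ω) f) ^ 2 ∂μ) ≤ C5 := by
  obtain ⟨D, hD0, hD⟩ := exists_Kform_add_one_le hL hsig hC1 hC2
  have hρ : (2 : ℝ) ^ (-(1 / 5 : ℝ)) < 1 :=
    Real.rpow_lt_one_of_one_lt_of_neg one_lt_two (by norm_num)
  refine ⟨D, 1 ^ 2 + D * ∑' j : ℕ, (1 + j + 1) ^ 2 * ((2 : ℝ) ^ (-(1 / 5 : ℝ))) ^ j, hD0,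
    by positivity, ?_⟩
  intro n hn r hr1 hr2 Kr hKr0 hKr f hf Ωs _ μ _ e _ _ fhat hfhat fbar hfbar hclose htail
  have hn2 : (2 : ℝ) ≤ n := by exact_mod_cast hn
  have hYZ (ω : Ωs) : supDist (fhat ω) f ≤ supDist (fhat ω) fbar + C1 * L * (Kr : ℝ) ^ (-r) :=
    (supDist_triangle (exists_abs_le_of_isCLSfun (hfhat ω)) (exists_abs_le_of_isCLSfun hfbar)
      (exists_abs_le_of_memCH hf)).trans (by gcongr)
  have htail' := measure_le_rpow_of_tail hn hL hsig hC1 hC2 (by linarith) hKr0 hKr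
    (by rw [hKr]; exact hD n hn r hr1 hr2) hYZ htail
  have hX (ω : Ωs) : 0 ≤ (psiform n L sig C1 C2 r)⁻¹ * supDist (fhat ω) f := by
    have : 0 ≤ psiform n L sig C1 C2 r := by rw [psiform, ← hKr]; positivity
    exact mul_nonneg (inv_nonneg.2 this) (supDist_nonneg _ _)
  constructor
  · have hsqrt2 : (7 / 5 : ℝ) ≤ √2 := Real.le_sqrt_of_sq_le (by norm_num)
    calc _ ≤ ENNReal.ofReal (D * (n : ℝ) ^ ((1 - (5 / 2 : ℝ) ^ 2) / (2 * r + 1))) :=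
          htail' (by norm_num)
            (by nlinarith [mul_le_mul_of_nonneg_right hsqrt2 (by linarith : (0 : ℝ) ≤ 2 * r + 1)])
      _ ≤ ENNReal.ofReal (D / n) := ENNReal.ofReal_le_ofReal (by
          rw [div_eq_mul_inv]
          exact mul_le_mul_of_nonneg_left
            (rpow_one_sub_sq_div_le_inv (by linarith) (by linarith) hr2) hD0.le)
  · refine integral_sq_le_of_measure_le_geometric hX hD0.le (by positivity) hρ fun j => ?_
    refine (htail' (v := 1 + j) (by positivity) (by nlinarith [j.cast_nonneg (α := ℝ)])).trans ?_
    exact ENNReal.ofReal_le_ofReal (mul_le_mul_of_nonneg_left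
      (rpow_one_sub_sq_div_le_geometric hn2 (by linarith) hr2 j) hD0.le)
end
end
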